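/- arXiv:1104.0067 — 9 statements merged into one kernel-verified Lean document; each statement's English description precedes it below -/
import Mathlib

section
/- Let K be a field, V a K-vector space of dimension at most 2, and Q a quadratic form on V. Then for every element x of the Clifford algebra of Q, the product x * reverse (involute x) is a scalar, i.e. it lies in the range of algebraMap K (CliffordAlgebra Q). (This scalar is the determinant of x; this is the paper's one- and two-dimensional determinant formula Det(A) = A⟦A⟧₁₂.) -/
/-!
Pick `v₀, v₁` spanning `V` and put `u = ι v₀`, `w = ι v₁`, so that `u² = Q v₀`, `w² = Q v₁`
and `w u = polar Q v₁ v₀ - u w`. These relations make `span {1, u} * span {1, w}` closed under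
multiplication, hence equal to the whole Clifford algebra, so every `x` has the form
`a + b u + (c + d u) w`. Its Clifford conjugate is `a - b u - w (c - d u)`, and expanding the
product with the three relations leaves the scalar
`a² - b² Q v₀ - c² Q v₁ + d² Q v₀ Q v₁ + (a d - b c) polar Q v₁ v₀`.
-/

open CliffordAlgebra Submodule
open scoped Pointwise

theorem Module.exists_span_pair_eq_top_of_finrank_le_two {K V : Type*} [DivisionRing K]
    [AddCommGroup V] [Module K V] [FiniteDimensional K V] (h : Module.finrank K V ≤ 2) :
    ∃ v₀ v₁ : V, span K {v₀, v₁} = ⊤ := by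
  let b := Module.finBasis K V
  let f : Fin 2 → V := fun i => if hi : (i : ℕ) < Module.finrank K V then b ⟨i, hi⟩ else 0
  refine ⟨f 0, f 1, eq_top_iff.2 ?_⟩
  rw [← b.span_eq, span_le, Set.range_subset_iff]
  intro i
  have hf : f (Fin.castLE h i) = b i := by simp [f]
  rw [← hf]
  generalize Fin.castLE h i = j
  fin_cases j <;> exact subset_span (by simp)

section Algebra

variable {K A : Type*} [CommRing K] [Ring A] [Algebra K A]

theorem Submodule.mul_self_le_of_mul_comm_le {U W : Submodule K A} (hU : U * U ≤ U)
    (hW : W * W ≤ W) (hWU : W * U ≤ U * W) : U * W * (U * W) ≤ U * W :=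
  calc U * W * (U * W) = U * (W * U) * W := by simp only [mul_assoc]
    _ ≤ U * (U * W) * W := by gcongr
    _ = U * U * (W * W) := by simp only [mul_assoc]
    _ ≤ U * W := by gcongr

theorem Submodule.exists_add_mul_of_mem_mul_span_one_pair {U : Submodule K A} {w x : A}
    (hx : x ∈ U * span K {1, w}) : ∃ y ∈ U, ∃ z ∈ U, y + z * w = x := by
  rw [span_insert, ← one_eq_span, mul_sup, Submodule.mul_one, mem_sup] at hx
  obtain ⟨y, hy, t, ht, rfl⟩ := hx
  obtain ⟨z, hz, rfl⟩ := mem_mul_span_singleton.1 ht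
  exact ⟨y, hy, z, hz, rfl⟩

variable {u w : A} {α β p : K}

theorem Submodule.span_one_pair_mul_self_le (hu : u * u = algebraMap K A α) :
    span K {1, u} * span K {1, u} ≤ span K {1, u} := by
  rw [span_mul_span, span_le, Set.mul_subset_iff]
  simp only [Set.mem_insert_iff, Set.mem_singleton_iff, forall_eq_or_imp, forall_eq, one_mul,
    mul_one, hu, Algebra.algebraMap_eq_smul_one, SetLike.mem_coe]
  exact ⟨⟨subset_span (by simp), subset_span (by simp)⟩, subset_span (by simp),
    smul_mem _ _ (subset_span (by simp))⟩

theorem Submodule.span_one_pair_mul_comm_le (hwu : w * u = algebraMap K A p - u * w) :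
    span K {1, w} * span K {1, u} ≤ span K {1, u} * span K {1, w} := by
  have mem : ∀ a ∈ ({1, u} : Set A), ∀ b ∈ ({1, w} : Set A),
      a * b ∈ span K {1, u} * span K {1, w} :=
    fun a ha b hb => mul_mem_mul (subset_span ha) (subset_span hb)
  have one_mem := mem 1 (by simp) 1 (by simp)
  rw [one_mul] at one_mem
  rw [span_mul_span, span_le, Set.mul_subset_iff]
  simp only [Set.mem_insert_iff, Set.mem_singleton_iff, forall_eq_or_imp, forall_eq, one_mul,
    mul_one, hwu, Algebra.algebraMap_eq_smul_one, SetLike.mem_coe]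
  exact ⟨⟨one_mem, by simpa using mem u (by simp) 1 (by simp)⟩,
    by simpa using mem 1 (by simp) w (by simp),
    sub_mem (smul_mem _ _ one_mem) (mem u (by simp) w (by simp))⟩

theorem mul_conj_eq_algebraMap_of_anticomm (hu : u * u = algebraMap K A α)
    (hw : w * w = algebraMap K A β) (hwu : w * u = algebraMap K A p - u * w) (a b c d : K) :
    (a • 1 + b • u + (c • 1 + d • u) * w) * (a • 1 - b • u - w * (c • 1 - d • u)) =
      algebraMap K A
        (a * a - b * b * α - c * c * β + d * d * (α * β) + (a * d - b * c) * p) := by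
  simp only [Algebra.algebraMap_eq_smul_one] at hu hw hwu ⊢
  have hu' : ∀ x : A, u * (u * x) = α • x := fun x => by rw [← mul_assoc, hu, smul_one_mul]
  have hwu' : ∀ x : A, w * (u * x) = p • x - u * (w * x) := fun x => by
    rw [← mul_assoc, hwu, sub_mul, smul_one_mul, mul_assoc]
  simp only [add_mul, mul_sub, sub_mul, smul_mul_assoc, mul_smul_comm, one_mul, mul_one,
    mul_assoc, hu, hw, hwu, hu', hwu', smul_sub, smul_add, smul_smul]
  module

end Algebra

namespace CliffordAlgebra

variable {R M : Type*} [CommRing R] [AddCommGroup M] [Module R M] {Q : QuadraticForm R M}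
  {v₀ v₁ : M}

theorem ι_mem_of_span_pair_eq_top (h : span R {v₀, v₁} = ⊤)
    {N : Submodule R (CliffordAlgebra Q)} (h₀ : ι Q v₀ ∈ N) (h₁ : ι Q v₁ ∈ N) (v : M) :
    ι Q v ∈ N := by
  obtain ⟨a, b, rfl⟩ := mem_span_pair.1 (h ▸ mem_top : v ∈ span R {v₀, v₁})
  rw [map_add, map_smul, map_smul]
  exact add_mem (smul_mem _ _ h₀) (smul_mem _ _ h₁)

theorem span_one_ι_mul_span_one_ι_eq_top (h : span R {v₀, v₁} = ⊤) :
    span R {1, ι Q v₀} * span R {1, ι Q v₁} = ⊤ := by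
  set N := span R {1, ι Q v₀} * span R {1, ι Q v₁}
  have mem : ∀ a ∈ ({1, ι Q v₀} : Set _), ∀ b ∈ ({1, ι Q v₁} : Set _), a * b ∈ N :=
    fun a ha b hb => mul_mem_mul (subset_span ha) (subset_span hb)
  have one_mem : (1 : CliffordAlgebra Q) ∈ N := by simpa using mem 1 (by simp) 1 (by simp)
  have mul_self_le : N * N ≤ N :=
    mul_self_le_of_mul_comm_le (span_one_pair_mul_self_le (ι_sq_scalar Q v₀))
      (span_one_pair_mul_self_le (ι_sq_scalar Q v₁))
      (span_one_pair_mul_comm_le (ι_mul_ι_comm v₁ v₀))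
  have ι_mem : ∀ v, ι Q v ∈ N := ι_mem_of_span_pair_eq_top h
    (by simpa using mem _ (by simp) 1 (by simp)) (by simpa using mem 1 (by simp) _ (by simp))
  let S := N.toSubalgebra one_mem fun _ _ hx hy => mul_self_le (mul_mem_mul hx hy)
  have top_le : ⊤ ≤ S :=
    adjoin_range_ι (Q := Q) ▸ Algebra.adjoin_le (Set.range_subset_iff.2 ι_mem)
  exact eq_top_iff.2 fun x _ => top_le Algebra.mem_top

theorem reverse_involute_add_mul_ι (a b c d : R) :
    reverse (involute (a • 1 + b • ι Q v₀ + (c • 1 + d • ι Q v₀) * ι Q v₁)) =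
      a • 1 - b • ι Q v₀ - ι Q v₁ * (c • 1 - d • ι Q v₀) := by
  simp only [map_add, map_smul, map_one, involute_ι, smul_neg, map_mul, mul_neg, reverse.map_one,
    map_neg, reverse_ι, reverse.map_mul]
  simp only [sub_eq_add_neg]

end CliffordAlgebra

/-- In dimension at most 2, `x * reverse (involute x)` (the paper's
`A ⟦A⟧₁₂`) is a scalar: the 1- and 2-dimensional determinant formula. -/
theorem det_dim_le_two (K V : Type*) [Field K] [AddCommGroup V] [Module K V]
    [FiniteDimensional K V] (hdim : Module.finrank K V ≤ 2)
    (Q : QuadraticForm K V) (x : CliffordAlgebra Q) :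
    x * reverse (involute x) ∈ Set.range (algebraMap K (CliffordAlgebra Q)) := by
  obtain ⟨v₀, v₁, hspan⟩ := Module.exists_span_pair_eq_top_of_finrank_le_two hdim
  have hx : x ∈ span K {1, ι Q v₀} * span K {1, ι Q v₁} := by
    rw [span_one_ι_mul_span_one_ι_eq_top hspan]
    exact mem_top
  obtain ⟨y, hy, z, hz, rfl⟩ := exists_add_mul_of_mem_mul_span_one_pair hx
  obtain ⟨a, b, rfl⟩ := mem_span_pair.1 hy
  obtain ⟨c, d, rfl⟩ := mem_span_pair.1 hz
  rw [reverse_involute_add_mul_ι]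
  exact ⟨_, (mul_conj_eq_algebraMap_of_anticomm (ι_sq_scalar Q v₀) (ι_sq_scalar Q v₁)
    (ι_mul_ι_comm v₁ v₀) a b c d).symm⟩
end

section
/- Let K be a field, V a K-vector space of dimension exactly 2, and Q a quadratic form on V. Then for every element x of the Clifford algebra of Q, involute x * reverse x = x * reverse (involute x), and this common value is a scalar, i.e. it lies in the range of algebraMap K (CliffordAlgebra Q). (This is the paper's alternative two-dimensional determinant formula Det(A) = ⟦A⟧₁⟦A⟧₂, which agrees with Det(A) = A⟦A⟧₁₂.) -/
open CliffordAlgebra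

private lemma det_dim_two_alt_aux {K V : Type*} [Field K] [AddCommGroup V] [Module K V]
    (Q : QuadraticForm K V) (v w : V) (a b c d : K) (x : CliffordAlgebra Q)
    (hx : x = a • 1 + b • ι Q v + c • ι Q w + d • (ι Q v * ι Q w)) :
    involute x * reverse x = x * reverse (involute x) ∧
      x * reverse (involute x) ∈ Set.range (algebraMap K (CliffordAlgebra Q)) := by
  set p := Q v with hp
  set q := Q w with hq
  set r := QuadraticMap.polar Q v w with hr
  have hVV0 : ι Q v * ι Q v = p • (1 : CliffordAlgebra Q) := by
    rw [ι_sq_scalar, Algebra.algebraMap_eq_smul_one]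
  have hWW0 : ι Q w * ι Q w = q • (1 : CliffordAlgebra Q) := by
    rw [ι_sq_scalar, Algebra.algebraMap_eq_smul_one]
  have hWV0 : ι Q w * ι Q v = r • (1 : CliffordAlgebra Q) - ι Q v * ι Q w := by
    rw [ι_mul_ι_comm, Algebra.algebraMap_eq_smul_one, hr, QuadraticMap.polar_comm]
  have hVV : ∀ z : CliffordAlgebra Q, ι Q v * (ι Q v * z) = p • z := by
    intro z; rw [← mul_assoc, hVV0, smul_mul_assoc, one_mul]
  have hWW : ∀ z : CliffordAlgebra Q, ι Q w * (ι Q w * z) = q • z := by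
    intro z; rw [← mul_assoc, hWW0, smul_mul_assoc, one_mul]
  have hWV : ∀ z : CliffordAlgebra Q, ι Q w * (ι Q v * z) = r • z - ι Q v * (ι Q w * z) := by
    intro z; rw [← mul_assoc, hWV0, sub_mul, smul_mul_assoc, one_mul, mul_assoc]
  have hinv : involute x = a • 1 - b • ι Q v - c • ι Q w + d • (ι Q v * ι Q w) := by
    simp [hx, map_add, map_smul, involute_ι, sub_eq_add_neg]
  have hrev : reverse (Q := Q) x = a • 1 + b • ι Q v + c • ι Q w + d • (ι Q w * ι Q v) := by
    simp [hx, map_add, map_smul, reverse.map_mul, reverse_ι]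
  have hrevinv : reverse (involute x)
      = a • 1 - b • ι Q v - c • ι Q w + d • (ι Q w * ι Q v) := by
    simp [hinv, map_add, map_sub, map_smul, reverse.map_mul, reverse_ι]
  constructor
  · rw [hrevinv, hinv, hrev, hx]
    simp only [mul_add, add_mul, mul_sub, sub_mul, smul_mul_assoc, mul_smul_comm,
      mul_assoc, hVV, hWW, hWV, hVV0, hWW0, hWV0, mul_one, one_mul, smul_add, smul_sub,
      smul_smul]
    module
  · refine ⟨a * a + a * (d * r) - b * b * p - c * c * q - b * c * r + d * d * (p * q), ?_⟩
    rw [hrevinv, hx, Algebra.algebraMap_eq_smul_one]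
    simp only [mul_add, add_mul, mul_sub, sub_mul, smul_mul_assoc, mul_smul_comm,
      mul_assoc, hVV, hWW, hWV, hVV0, hWW0, hWV0, mul_one, one_mul, smul_add, smul_sub,
      smul_smul]
    module

/-- In dimension exactly 2, `involute x * reverse x = x * reverse (involute x)`
(the paper's `⟦A⟧₁ ⟦A⟧₂ = A ⟦A⟧₁₂`), and this common value is a scalar. -/
theorem det_dim_two_alt (K V : Type*) [Field K] [AddCommGroup V] [Module K V]
    [FiniteDimensional K V] (hdim : Module.finrank K V = 2)
    (Q : QuadraticForm K V) (x : CliffordAlgebra Q) :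
    involute x * reverse x = x * reverse (involute x) ∧
      x * reverse (involute x) ∈ Set.range (algebraMap K (CliffordAlgebra Q)) := by
  let bV := Module.finBasisOfFinrankEq K V hdim
  set v := bV 0
  set w := bV 1
  set e1 := ι Q v with he1
  set e2 := ι Q w with he2
  set S : Submodule K (CliffordAlgebra Q) :=
    Submodule.span K {1, e1, e2, e1 * e2} with hS
  have h1 : (1 : CliffordAlgebra Q) ∈ S := Submodule.subset_span (by simp)
  have hm1 : e1 ∈ S := Submodule.subset_span (by simp)
  have hm2 : e2 ∈ S := Submodule.subset_span (by simp)
  have hm12 : e1 * e2 ∈ S := Submodule.subset_span (by simp)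
  have hVV0 : e1 * e1 = algebraMap K _ (Q v) := ι_sq_scalar Q v
  have hWW0 : e2 * e2 = algebraMap K _ (Q w) := ι_sq_scalar Q w
  have hWV0 : e2 * e1 = algebraMap K _ (QuadraticMap.polar Q w v) - e1 * e2 :=
    ι_mul_ι_comm w v
  have halg : ∀ r : K, algebraMap K (CliffordAlgebra Q) r ∈ S := by
    intro r
    rw [Algebra.algebraMap_eq_smul_one]
    exact S.smul_mem _ h1
  -- closure of S under left multiplication by e1 and e2
  have hS1 : ∀ y ∈ S, e1 * y ∈ S := by
    intro y hy
    induction hy using Submodule.span_induction with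
    | mem z hz =>
      rcases hz with rfl | rfl | rfl | rfl
      · simpa using hm1
      · rw [hVV0]; exact halg _
      · exact hm12
      · rw [← mul_assoc, hVV0, Algebra.algebraMap_eq_smul_one, smul_mul_assoc, one_mul]
        exact S.smul_mem _ hm2
    | zero => simpa using S.zero_mem
    | add u v hu hv hu' hv' => rw [mul_add]; exact S.add_mem hu' hv'
    | smul t u hu hu' => rw [mul_smul_comm]; exact S.smul_mem _ hu'
  have hS2 : ∀ y ∈ S, e2 * y ∈ S := by
    intro y hy
    induction hy using Submodule.span_induction with
    | mem z hz =>
      rcases hz with rfl | rfl | rfl | rfl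
      · simpa using hm2
      · rw [hWV0]; exact S.sub_mem (halg _) hm12
      · rw [hWW0]; exact halg _
      · rw [← mul_assoc, hWV0, sub_mul, Algebra.algebraMap_eq_smul_one, smul_mul_assoc,
          one_mul, mul_assoc, hWW0, Algebra.algebraMap_eq_smul_one, mul_smul_comm, mul_one]
        exact S.sub_mem (S.smul_mem _ hm2) (S.smul_mem _ hm1)
    | zero => simpa using S.zero_mem
    | add u v hu hv hu' hv' => rw [mul_add]; exact S.add_mem hu' hv'
    | smul t u hu hu' => rw [mul_smul_comm]; exact S.smul_mem _ hu'
  have hmul : ∀ z ∈ S, ∀ y ∈ S, z * y ∈ S := by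
    intro z hz
    induction hz using Submodule.span_induction with
    | mem g hg =>
      rcases hg with rfl | rfl | rfl | rfl
      · intro y hy; simpa using hy
      · exact hS1
      · exact hS2
      · intro y hy; rw [mul_assoc]; exact hS1 _ (hS2 _ hy)
    | zero => intro y hy; simpa using S.zero_mem
    | add u v hu hv hu' hv' =>
      intro y hy; rw [add_mul]; exact S.add_mem (hu' y hy) (hv' y hy)
    | smul t u hu hu' =>
      intro y hy; rw [smul_mul_assoc]; exact S.smul_mem _ (hu' y hy)
  have hι : ∀ m : V, ι Q m ∈ S := by
    intro m
    have hrepr : m = bV.repr m 0 • v + bV.repr m 1 • w := by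
      have := bV.sum_repr m
      rw [Fin.sum_univ_two] at this
      exact this.symm
    rw [hrepr, map_add, map_smul, map_smul]
    exact S.add_mem (S.smul_mem _ hm1) (S.smul_mem _ hm2)
  have hx : x ∈ S := by
    induction x using CliffordAlgebra.induction with
    | algebraMap r => exact halg r
    | ι m => exact hι m
    | mul a b ha hb => exact hmul a ha b hb
    | add a b ha hb => exact S.add_mem ha hb
  -- extract coefficients
  rw [hS] at hx
  rw [show ({1, e1, e2, e1 * e2} : Set (CliffordAlgebra Q))
      = insert 1 (insert e1 (insert e2 {e1 * e2})) from rfl] at hx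
  rw [Submodule.mem_span_insert] at hx
  obtain ⟨a, x₁, hx₁, rfl⟩ := hx
  rw [Submodule.mem_span_insert] at hx₁
  obtain ⟨b, x₂, hx₂, rfl⟩ := hx₁
  rw [Submodule.mem_span_insert] at hx₂
  obtain ⟨c, x₃, hx₃, rfl⟩ := hx₂
  rw [Submodule.mem_span_singleton] at hx₃
  obtain ⟨d, rfl⟩ := hx₃
  exact det_dim_two_alt_aux Q v w a b c d _ (by abel)
end

section
/- Let K be a field of characteristic not 2, V a K-vector space of dimension 3, and Q a quadratic form on V. Then for every element x of the Clifford algebra of Q, the product x * conj x * reverse (x * conj x), where conj x := reverse (involute x), is a scalar, i.e. it lies in the range of algebraMap K (CliffordAlgebra Q). (This is the paper's first three-dimensional determinant formula Det(A) = A⟦A⟧₁₂⟦A⟦A⟧₁₂⟧₃₄, written in reverse–inversion form as Det(A) = A · conj(A) · rev(A · conj(A)).) -/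
/-!
Take an orthogonal basis `u, v, w` of `V`. The eight products of distinct basis vectors span
the Clifford algebra, and the Clifford conjugate negates those of grade 1 and 2 while fixing `1`
and `ω = u v w`. As an anti-involution, the conjugate fixes `y = x * conj x`; since `2` is
invertible, `y = a + b ω`. Reversion negates `ω` and `ω² = -Q(u) Q(v) Q(w)`, so
`y * reverse y = a² + b² Q(u) Q(v) Q(w)` is a scalar.
-/

open CliffordAlgebra

namespace CliffordAlgebra

variable {R M : Type*} [CommRing R] [AddCommGroup M] [Module R M] {Q : QuadraticForm R M}

theorem reverse_involute_mul_self_reverse_involute (x : CliffordAlgebra Q) :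
    reverse (involute (x * reverse (involute x))) = x * reverse (involute x) := by
  simp only [map_mul, reverse.map_mul, reverse_involute, involute_involute, reverse_reverse]

theorem ι_mul_ι_mul_eq_smul (m : M) (y : CliffordAlgebra Q) :
    ι Q m * (ι Q m * y) = Q m • y := by
  rw [← mul_assoc, ι_sq_scalar, Algebra.smul_def]

theorem ι_mul_ι_eq_smul_one (m : M) : ι Q m * ι Q m = Q m • (1 : CliffordAlgebra Q) := by
  rw [ι_sq_scalar, Algebra.smul_def, mul_one]

variable (Q) in
def bladeSpan (u v w : M) : Submodule R (CliffordAlgebra Q) :=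
  Submodule.span R {1, ι Q u, ι Q v, ι Q w, ι Q u * ι Q v, ι Q u * ι Q w, ι Q v * ι Q w,
    ι Q u * (ι Q v * ι Q w)}

theorem ι_mul_mem_bladeSpan {u v w m : M} (huv : Q.IsOrtho u v) (huw : Q.IsOrtho u w)
    (hvw : Q.IsOrtho v w) (hm : m ∈ ({u, v, w} : Set M)) {y : CliffordAlgebra Q}
    (hy : y ∈ bladeSpan Q u v w) : ι Q m * y ∈ bladeSpan Q u v w := by
  induction hy using Submodule.span_induction with
  | mem b hb =>
    simp only [Set.mem_insert_iff, Set.mem_singleton_iff] at hm hb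
    obtain rfl | rfl | rfl := hm <;> obtain rfl | rfl | rfl | rfl | rfl | rfl | rfl | rfl := hb <;>
    try simp only [mul_one, mul_neg, neg_neg, mul_smul_comm, ι_mul_ι_mul_eq_smul,
      ι_mul_ι_eq_smul_one, ι_mul_ι_comm_of_isOrtho huv.symm, ι_mul_ι_comm_of_isOrtho huw.symm,
      ι_mul_ι_comm_of_isOrtho hvw.symm, ι_mul_ι_mul_of_isOrtho _ huv.symm,
      ι_mul_ι_mul_of_isOrtho _ huw.symm, ι_mul_ι_mul_of_isOrtho _ hvw.symm]
    all_goals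
      try apply Submodule.neg_mem
      try refine Submodule.smul_mem _ _ ?_
      exact Submodule.subset_span (by simp)
  | zero => simp
  | add a b _ _ ha hb => rw [mul_add]; exact add_mem ha hb
  | smul r a _ ha => rw [mul_smul_comm]; exact Submodule.smul_mem _ r ha

theorem bladeSpan_eq_top {u v w : M} (huv : Q.IsOrtho u v) (huw : Q.IsOrtho u w)
    (hvw : Q.IsOrtho v w) (hspan : Submodule.span R {u, v, w} = ⊤) :
    bladeSpan Q u v w = ⊤ := by
  have ι_mul_mem (m : M) {y} (hy : y ∈ bladeSpan Q u v w) : ι Q m * y ∈ bladeSpan Q u v w := by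
    have hm : m ∈ Submodule.span R {u, v, w} := hspan ▸ Submodule.mem_top
    induction hm using Submodule.span_induction with
    | mem m hm => exact ι_mul_mem_bladeSpan huv huw hvw hm hy
    | zero => simp
    | add a b _ _ ha hb => rw [map_add, add_mul]; exact add_mem ha hb
    | smul r a _ ha => rw [map_smul, smul_mul_assoc]; exact Submodule.smul_mem _ r ha
  have mul_mem (z : CliffordAlgebra Q) {y} (hy : y ∈ bladeSpan Q u v w) :
      z * y ∈ bladeSpan Q u v w := by
    induction z using CliffordAlgebra.induction generalizing y with
    | algebraMap r => rw [← Algebra.smul_def]; exact Submodule.smul_mem _ r hy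
    | ι m => exact ι_mul_mem m hy
    | mul a b ha hb => rw [mul_assoc]; exact ha (hb hy)
    | add a b ha hb => rw [add_mul]; exact add_mem (ha hy) (hb hy)
  refine eq_top_iff.2 fun z _ => ?_
  simpa using mul_mem z (Submodule.subset_span (by simp) : 1 ∈ bladeSpan Q u v w)

theorem add_reverse_involute_mem_span_one_ι_mul_ι_mul_ι {u v w : M} (huv : Q.IsOrtho u v)
    (huw : Q.IsOrtho u w) (hvw : Q.IsOrtho v w) {z : CliffordAlgebra Q}
    (hz : z ∈ bladeSpan Q u v w) :
    z + reverse (involute z) ∈ Submodule.span R {1, ι Q u * (ι Q v * ι Q w)} := by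
  induction hz using Submodule.span_induction with
  | mem b hb =>
    simp only [Set.mem_insert_iff, Set.mem_singleton_iff] at hb
    obtain rfl | rfl | rfl | rfl | rfl | rfl | rfl | rfl := hb <;>
    simp only [map_one, map_mul, involute_ι, reverse.map_one, reverse.map_mul, reverse_ι,
      map_neg, neg_mul, mul_neg, neg_neg, mul_assoc, ι_mul_ι_comm_of_isOrtho huv.symm,
      ι_mul_ι_comm_of_isOrtho huw.symm, ι_mul_ι_comm_of_isOrtho hvw.symm,
      ι_mul_ι_mul_of_isOrtho _ huv.symm, add_neg_cancel, ← two_smul R]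
    all_goals first
      | exact Submodule.zero_mem _
      | exact Submodule.smul_mem _ _ (Submodule.subset_span (by simp))
  | zero => simp
  | add a b _ _ ha hb => rw [map_add, map_add, add_add_add_comm]; exact add_mem ha hb
  | smul r a _ ha => rw [map_smul, map_smul, ← smul_add]; exact Submodule.smul_mem _ r ha

theorem reverse_ι_mul_ι_mul_ι {u v w : M} (huv : Q.IsOrtho u v) (huw : Q.IsOrtho u w)
    (hvw : Q.IsOrtho v w) :
    reverse (ι Q u * (ι Q v * ι Q w)) = -(ι Q u * (ι Q v * ι Q w)) := by
  simp only [reverse.map_mul, reverse_ι, mul_assoc, ι_mul_ι_comm_of_isOrtho huw.symm,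
    ι_mul_ι_comm_of_isOrtho hvw.symm, ι_mul_ι_mul_of_isOrtho _ huv.symm, mul_neg, neg_mul, neg_neg]

theorem ι_mul_ι_mul_ι_mul_self {u v w : M} (huv : Q.IsOrtho u v) (huw : Q.IsOrtho u w)
    (hvw : Q.IsOrtho v w) :
    ι Q u * (ι Q v * ι Q w) * (ι Q u * (ι Q v * ι Q w)) = algebraMap R _ (-(Q u * Q v * Q w)) := by
  simp only [mul_assoc, ι_mul_ι_mul_of_isOrtho _ huv.symm, ι_mul_ι_mul_of_isOrtho _ huw.symm,
    ι_mul_ι_mul_of_isOrtho _ hvw.symm, mul_neg, neg_neg, ι_mul_ι_mul_eq_smul, ι_mul_ι_eq_smul_one,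
    mul_smul_comm, smul_smul, smul_neg, Algebra.algebraMap_eq_smul_one]
  module

theorem mul_reverse_mem_range_algebraMap {ω y : CliffordAlgebra Q} {r : R}
    (hω : reverse ω = -ω) (hω2 : ω * ω = algebraMap R _ r)
    (hy : y ∈ Submodule.span R {1, ω}) : y * reverse y ∈ Set.range (algebraMap R _) := by
  obtain ⟨a, b, rfl⟩ := Submodule.mem_span_pair.mp hy
  have hrev : reverse (a • 1 + b • ω) = a • 1 - b • ω := by
    rw [map_add, map_smul, map_smul, reverse.map_one, hω, smul_neg, sub_eq_add_neg]
  refine ⟨a * a - b * b * r, ?_⟩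
  simp only [hrev, add_mul, mul_sub, smul_mul_smul_comm, one_mul, mul_one, hω2,
    Algebra.algebraMap_eq_smul_one]
  module

theorem mem_span_one_ι_mul_ι_mul_ι_of_reverse_involute_eq [Invertible (2 : R)] {u v w : M}
    (huv : Q.IsOrtho u v) (huw : Q.IsOrtho u w) (hvw : Q.IsOrtho v w)
    (hspan : Submodule.span R {u, v, w} = ⊤) {y : CliffordAlgebra Q}
    (hy : reverse (involute y) = y) : y ∈ Submodule.span R {1, ι Q u * (ι Q v * ι Q w)} := by
  have hy_mem : y ∈ bladeSpan Q u v w := bladeSpan_eq_top huv huw hvw hspan ▸ Submodule.mem_top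
  have h := add_reverse_involute_mem_span_one_ι_mul_ι_mul_ι huv huw hvw hy_mem
  rw [hy, ← two_smul R] at h
  simpa using Submodule.smul_mem _ (⅟2 : R) h

theorem mul_reverse_involute_mul_reverse_mem_range_algebraMap [Invertible (2 : R)] {u v w : M}
    (huv : Q.IsOrtho u v) (huw : Q.IsOrtho u w) (hvw : Q.IsOrtho v w)
    (hspan : Submodule.span R {u, v, w} = ⊤) (x : CliffordAlgebra Q) :
    x * reverse (involute x) * reverse (x * reverse (involute x)) ∈
      Set.range (algebraMap R (CliffordAlgebra Q)) :=
  mul_reverse_mem_range_algebraMap (reverse_ι_mul_ι_mul_ι huv huw hvw)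
    (ι_mul_ι_mul_ι_mul_self huv huw hvw)
    (mem_span_one_ι_mul_ι_mul_ι_of_reverse_involute_eq huv huw hvw hspan
      (reverse_involute_mul_self_reverse_involute x))

end CliffordAlgebra

/-- In dimension 3 (char K ≠ 2), `x * conj x * reverse (x * conj x)` with
`conj y = reverse (involute y)` is a scalar: the paper's first
three-dimensional determinant formula `Det(A) = A ⟦A⟧₁₂ ⟦A ⟦A⟧₁₂⟧₃₄`. -/
theorem det_dim_three_first (K V : Type*) [Field K] [AddCommGroup V] [Module K V]
    [FiniteDimensional K V] (h2 : (2 : K) ≠ 0)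
    (hdim : Module.finrank K V = 3)
    (Q : QuadraticForm K V) (x : CliffordAlgebra Q) :
    x * reverse (involute x) * reverse (x * reverse (involute x)) ∈
      Set.range (algebraMap K (CliffordAlgebra Q)) := by
  have := invertibleOfNonzero h2
  obtain ⟨b, hb⟩ :=
    LinearMap.BilinForm.exists_orthogonal_basis (QuadraticForm.associated_isSymm K Q)
  let e := b.reindex (finCongr hdim)
  have he (i j : Fin 3) (hij : i ≠ j) : Q.IsOrtho (e i) (e j) := by
    rw [← QuadraticMap.associated_isOrtho (R := K), Module.Basis.reindex_apply,
      Module.Basis.reindex_apply]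
    exact hb ((finCongr hdim).symm.injective.ne hij)
  have hspan : Submodule.span K {e 0, e 1, e 2} = ⊤ := by
    rw [← e.span_eq]
    congr
    ext
    simp [Fin.exists_fin_succ, eq_comm]
  exact mul_reverse_involute_mul_reverse_mem_range_algebraMap (he 0 1 (by decide))
    (he 0 2 (by decide)) (he 1 2 (by decide)) hspan x
end

section
/- Let K be a field of characteristic not 2, V a K-vector space of dimension 3, and Q a quadratic form on V. Then for every element x of the Clifford algebra of Q there exists d : K such that, writing conj y := reverse (involute y), all four products x * reverse x * involute x * conj x, x * involute x * reverse x * conj x, x * conj x * involute x * reverse x, and x * conj x * reverse x * involute x equal algebraMap d. (These are the paper's four three-dimensional grade-negated product determinant formulas Det(A) = A⟦A⟧₂₃⟦A⟧₁₃⟦A⟧₁₂ = A⟦A⟧₁₃⟦A⟧₂₃⟦A⟧₁₂ = A⟦A⟧₁₂⟦A⟧₁₃⟦A⟧₂₃ = A⟦A⟧₁₂⟦A⟧₂₃⟦A⟧₁₃, all equal to the same determinant.) -/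
/-!
In dimension 3 the Clifford conjugate `star = reverse ∘ involute` fixes grades 0 and 3 and
negates grades 1 and 2. Hence, for an orthogonal basis `u, v, w`, every `y + star y` lies in the
span of `1` and the central pseudoscalar `ι u * ι v * ι w`; so it is central, and
`y + involute y + reverse y + star y` (four times the scalar part of `y`) is a scalar.
Then `S = reverse x * involute x` and `T = x * star x` are self-adjoint, hence central, and
`involute` and `reverse` both swap them, so `S * T` is fixed by all three involutions and is a
scalar. Each of the four products regroups as `S * T`.
-/

namespace CliffordAlgebra

variable {R M : Type*} [CommRing R] [AddCommGroup M] [Module R M] {Q : QuadraticForm R M}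

@[simp]
theorem involute_star (x : CliffordAlgebra Q) : involute (star x) = reverse x := by
  rw [star_def', involute_involute]

@[simp]
theorem star_reverse (x : CliffordAlgebra Q) : star (reverse x) = involute x := by
  rw [star_def', reverse_reverse]

@[simp]
theorem reverse_star (x : CliffordAlgebra Q) : reverse (star x) = involute x := by
  rw [star_def, reverse_reverse]

section CentralConjugateSums

variable
  (hcenter : ∀ y : CliffordAlgebra Q, y + star y ∈ Subalgebra.center R (CliffordAlgebra Q))
include hcenter

theorem isStarNormal_of_add_star_mem_center (y : CliffordAlgebra Q) : IsStarNormal y := by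
  have h := Subalgebra.mem_center_iff.mp (hcenter y) y
  rw [mul_add, add_mul, add_right_inj] at h
  exact ⟨h.symm⟩

theorem mem_center_of_isSelfAdjoint_of_add_star_mem_center [Invertible (2 : R)]
    {z : CliffordAlgebra Q} (hz : IsSelfAdjoint z) :
    z ∈ Subalgebra.center R (CliffordAlgebra Q) := by
  have h := Subalgebra.smul_mem _ (hcenter z) (⅟2 : R)
  rwa [hz.star_eq, ← two_smul R, smul_smul, invOf_mul_self, one_smul] at h

theorem exists_mul_reverse_mul_involute_mul_star_eq_algebraMap [Invertible (2 : R)]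
    (hscalar : ∀ y : CliffordAlgebra Q,
      y + involute y + reverse y + star y ∈ (⊥ : Subalgebra R (CliffordAlgebra Q)))
    (x : CliffordAlgebra Q) :
    ∃ d : R,
      x * reverse x * involute x * star x = algebraMap R (CliffordAlgebra Q) d ∧
      x * involute x * reverse x * star x = algebraMap R (CliffordAlgebra Q) d ∧
      x * star x * involute x * reverse x = algebraMap R (CliffordAlgebra Q) d ∧
      x * star x * reverse x * involute x = algebraMap R (CliffordAlgebra Q) d := by
  set S := reverse x * involute x with hS
  set T := x * star x
  have hS_sa : IsSelfAdjoint S := by simpa using IsSelfAdjoint.mul_star_self (reverse x)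
  have hT_sa : IsSelfAdjoint T := IsSelfAdjoint.mul_star_self x
  have hcentral {z : CliffordAlgebra Q} (hz : IsSelfAdjoint z) (y : CliffordAlgebra Q) :
      Commute z y :=
    (Subalgebra.mem_center_iff.mp
      (mem_center_of_isSelfAdjoint_of_add_star_mem_center hcenter hz) y).symm
  have hS_swap : involute x * reverse x = S := by
    simpa using (isStarNormal_of_add_star_mem_center hcenter (reverse x)).star_comm_self.eq
  have hT_swap : star x * x = T := (isStarNormal_of_add_star_mem_center hcenter x).star_comm_self
  have hinv : involute (S * T) = S * T := by
    rw [map_mul, map_mul, map_mul, involute_involute, involute_star, ← star_def', hS_swap,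
      hT_swap, (hcentral hT_sa S).eq]
  have hrev : reverse (S * T) = S * T := by
    rw [reverse.map_mul, reverse.map_mul, reverse.map_mul, reverse_star, reverse_reverse,
      ← star_def, hS_swap, hT_swap]
  have hstar : star (S * T) = S * T := by
    rw [star_mul, hS_sa.star_eq, hT_sa.star_eq, (hcentral hT_sa S).eq]
  have h4ST := hscalar (S * T)
  rw [hinv, hrev, hstar, show S * T + S * T + S * T + S * T = (2 * 2 : R) • (S * T) by module]
    at h4ST
  have hST := Subalgebra.smul_mem _ h4ST (⅟2 * ⅟2 : R)
  rw [smul_smul, mul_mul_mul_comm, invOf_mul_self, one_mul, one_smul] at hST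
  obtain ⟨d, hd⟩ := Algebra.mem_bot.mp hST
  refine ⟨d, ?_, ?_, ?_, ?_⟩
  · rw [hd, mul_assoc x, ← hS, ← (hcentral hS_sa x).eq, mul_assoc]
  · rw [hd, mul_assoc x, hS_swap, ← (hcentral hS_sa x).eq, mul_assoc]
  · rw [hd, mul_assoc T, hS_swap, (hcentral hT_sa S).eq]
  · rw [hd, mul_assoc T, (hcentral hT_sa S).eq]

end CentralConjugateSums

section ConjugateSumsInSpan

variable {z : CliffordAlgebra Q}
  (hz : ∀ y : CliffordAlgebra Q, y + star y ∈ Submodule.span R {1, z})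
include hz

theorem add_star_mem_center_of_mem_span (hz_center : z ∈ Subalgebra.center R (CliffordAlgebra Q))
    (y : CliffordAlgebra Q) : y + star y ∈ Subalgebra.center R (CliffordAlgebra Q) := by
  have h : Submodule.span R {1, z} ≤ Subalgebra.toSubmodule (Subalgebra.center R _) :=
    Submodule.span_le.mpr (Set.pair_subset (Subalgebra.one_mem _) hz_center)
  exact h (hz y)

theorem add_involute_add_reverse_add_star_mem_bot_of_mem_span (hz_involute : involute z = -z)
    (y : CliffordAlgebra Q) :
    y + involute y + reverse y + star y ∈ (⊥ : Subalgebra R (CliffordAlgebra Q)) := by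
  obtain ⟨a, b, hab⟩ := Submodule.mem_span_pair.mp (hz y)
  have h : y + involute y + reverse y + star y = (y + star y) + involute (y + star y) := by
    rw [map_add, involute_star]; abel
  rw [h, ← hab, map_add, map_smul, map_smul, map_one, hz_involute,
    show a • 1 + b • z + (a • 1 + b • -z) = (a + a) • (1 : CliffordAlgebra Q) by module]
  exact Subalgebra.smul_mem _ (Subalgebra.one_mem _) _

end ConjugateSumsInSpan

theorem range_ι_eq_span_image {s : Set M} (hs : Submodule.span R s = ⊤) :
    LinearMap.range (ι Q) = Submodule.span R (ι Q '' s) := by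
  rw [LinearMap.range_eq_map, ← hs, Submodule.map_span]

theorem eq_top_of_one_mem_of_range_ι_mul_le {N : Submodule R (CliffordAlgebra Q)} (h1 : 1 ∈ N)
    (hN : LinearMap.range (ι Q) * N ≤ N) : N = ⊤ := by
  rw [eq_top_iff, ← iSup_ι_range_eq_top, iSup_le_iff]
  intro n
  induction n with
  | zero => rwa [pow_zero, Submodule.one_le]
  | succ n ih =>
    calc LinearMap.range (ι Q) ^ (n + 1) = LinearMap.range (ι Q) * LinearMap.range (ι Q) ^ n :=
          pow_succ' _ _
      _ ≤ LinearMap.range (ι Q) * N := by gcongr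
      _ ≤ N := hN

theorem mem_center_of_commute_ι {s : Set M} (hs : Submodule.span R s = ⊤)
    {z : CliffordAlgebra Q} (hz : ∀ m ∈ s, Commute z (ι Q m)) :
    z ∈ Subalgebra.center R (CliffordAlgebra Q) := by
  have htop : Algebra.adjoin R (ι Q '' s) = ⊤ := by
    rw [← Algebra.adjoin_span, ← range_ι_eq_span_image hs, LinearMap.coe_range,
      adjoin_range_ι]
  refine Subalgebra.mem_center_iff.mpr fun b => ?_
  refine (Algebra.commute_of_mem_adjoin_of_forall_mem_commute (htop ▸ Algebra.mem_top) ?_).eq.symm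
  rintro _ ⟨m, hm, rfl⟩
  exact hz m hm

open Submodule in
theorem span_singleton_ι_mul_span_one_ι_le (v : M) :
    (R ∙ ι Q v) * span R {1, ι Q v} ≤ span R {1, ι Q v} := by
  rw [span_mul_span, span_le, Set.singleton_mul, Set.image_pair, mul_one, ι_sq_scalar,
    Set.pair_subset_iff, Algebra.algebraMap_eq_smul_one]
  exact ⟨subset_span (by simp), smul_mem _ _ (subset_span (by simp))⟩

open Submodule in
theorem span_singleton_ι_mul_span_one_ι_le_of_isOrtho {u v : M} (h : Q.IsOrtho u v) :
    (R ∙ ι Q v) * span R {1, ι Q u} ≤ span R {1, ι Q u} * (R ∙ ι Q v) := by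
  rw [span_mul_span, span_mul_span, span_le, Set.singleton_mul, Set.image_pair, mul_one,
    ι_mul_ι_comm_of_isOrtho h.symm, Set.pair_subset_iff]
  exact ⟨subset_span ⟨1, by simp, ι Q v, rfl, one_mul _⟩,
    neg_mem (subset_span (Set.mul_mem_mul (by simp) rfl))⟩

theorem star_ι_mul_ι_of_isOrtho {u v : M} (h : Q.IsOrtho u v) :
    star (ι Q u * ι Q v) = -(ι Q u * ι Q v) := by
  rw [star_mul, star_ι, star_ι, neg_mul_neg, ι_mul_ι_comm_of_isOrtho h.symm]

section OrthogonalTriple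

variable {u v w : M} (huv : Q.IsOrtho u v) (huw : Q.IsOrtho u w) (hvw : Q.IsOrtho v w)

include huv huw hvw in
open Submodule in
theorem span_one_ι_mul_span_one_ι_mul_span_one_ι_eq_top
    (hspan : span R {u, v, w} = ⊤) :
    span R {1, ι Q u} * span R {1, ι Q v} * span R {1, ι Q w} = ⊤ := by
  set A := span R {1, ι Q u}
  set B := span R {1, ι Q v}
  set C := span R {1, ι Q w}
  refine eq_top_of_one_mem_of_range_ι_mul_le ?_ ?_
  · have h1 (m : M) : (1 : CliffordAlgebra Q) ∈ span R {1, ι Q m} := subset_span (by simp)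
    simpa using mul_mem_mul (mul_mem_mul (h1 u) (h1 v)) (h1 w)
  rw [range_ι_eq_span_image hspan, Set.image_insert_eq, Set.image_pair, span_insert, span_insert,
    Submodule.sup_mul, Submodule.sup_mul, sup_le_iff, sup_le_iff]
  refine ⟨?_, ?_, ?_⟩
  · calc (R ∙ ι Q u) * (A * B * C) = (R ∙ ι Q u) * A * B * C := by simp only [mul_assoc]
      _ ≤ A * B * C := by gcongr; exact span_singleton_ι_mul_span_one_ι_le u
  · calc (R ∙ ι Q v) * (A * B * C) = (R ∙ ι Q v) * A * B * C := by simp only [mul_assoc]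
      _ ≤ A * (R ∙ ι Q v) * B * C := by
        gcongr ?_ * _ * _; exact span_singleton_ι_mul_span_one_ι_le_of_isOrtho huv
      _ = A * ((R ∙ ι Q v) * B) * C := by simp only [mul_assoc]
      _ ≤ A * B * C := by gcongr; exact span_singleton_ι_mul_span_one_ι_le v
  · calc (R ∙ ι Q w) * (A * B * C) = (R ∙ ι Q w) * A * B * C := by simp only [mul_assoc]
      _ ≤ A * (R ∙ ι Q w) * B * C := by
        gcongr ?_ * _ * _; exact span_singleton_ι_mul_span_one_ι_le_of_isOrtho huw
      _ = A * ((R ∙ ι Q w) * B) * C := by simp only [mul_assoc]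
      _ ≤ A * (B * (R ∙ ι Q w)) * C := by
        gcongr A * ?_ * _; exact span_singleton_ι_mul_span_one_ι_le_of_isOrtho hvw
      _ = A * B * ((R ∙ ι Q w) * C) := by simp only [mul_assoc]
      _ ≤ A * B * C := by gcongr; exact span_singleton_ι_mul_span_one_ι_le w

include huv huw hvw in
theorem star_ι_mul_ι_mul_ι_of_isOrtho :
    star (ι Q u * ι Q v * ι Q w) = ι Q u * ι Q v * ι Q w := by
  rw [star_mul, star_ι_mul_ι_of_isOrtho huv, star_ι, neg_mul_neg, ← mul_assoc,
    ι_mul_ι_comm_of_isOrtho huw.symm, neg_mul, mul_ι_mul_ι_of_isOrtho _ hvw.symm, neg_neg]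

include huv huw hvw in
theorem ι_mul_ι_mul_ι_mem_center (hspan : Submodule.span R {u, v, w} = ⊤) :
    ι Q u * ι Q v * ι Q w ∈ Subalgebra.center R (CliffordAlgebra Q) := by
  refine mem_center_of_commute_ι hspan ?_
  simp only [Set.mem_insert_iff, Set.mem_singleton_iff, forall_eq_or_imp, forall_eq]
  refine ⟨?_, ?_, ?_⟩ <;> simp only [Commute, SemiconjBy]
  · rw [mul_ι_mul_ι_of_isOrtho _ huw.symm, mul_ι_mul_ι_of_isOrtho _ huv.symm]
    simp only [neg_mul, neg_neg, mul_assoc]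
  · rw [mul_ι_mul_ι_of_isOrtho _ hvw.symm, ← mul_assoc, ← mul_assoc,
      ι_mul_ι_comm_of_isOrtho huv.symm]
    simp only [neg_mul, mul_assoc]
  · rw [← mul_assoc, ← mul_assoc, ι_mul_ι_comm_of_isOrtho huw.symm, neg_mul, neg_mul,
      mul_ι_mul_ι_of_isOrtho _ hvw.symm, neg_mul, neg_neg]

include huv huw hvw in
open Submodule Pointwise in
theorem add_star_mem_span_one_ι_mul_ι_mul_ι (hspan : span R {u, v, w} = ⊤)
    (y : CliffordAlgebra Q) : y + star y ∈ span R {1, ι Q u * ι Q v * ι Q w} := by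
  have hy : y ∈ span R ({1, ι Q u} * {1, ι Q v} * {1, ι Q w} : Set (CliffordAlgebra Q)) := by
    rw [← span_mul_span, ← span_mul_span,
      span_one_ι_mul_span_one_ι_mul_span_one_ι_eq_top huv huw hvw hspan]
    trivial
  induction hy using span_induction with
  | mem m hm =>
    -- `star` fixes the monomials `1` and `ι u * ι v * ι w` and negates the other six
    obtain ⟨_, ⟨p, hp, q, hq, rfl⟩, r, hr, rfl⟩ := hm
    rcases hp with rfl | rfl <;> rcases hq with rfl | rfl <;> rcases hr with rfl | rfl <;>
      simp only [one_mul, mul_one, star_one, star_ι, star_ι_mul_ι_of_isOrtho huv,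
        star_ι_mul_ι_of_isOrtho huw, star_ι_mul_ι_of_isOrtho hvw,
        star_ι_mul_ι_mul_ι_of_isOrtho huv huw hvw, add_neg_cancel, zero_mem] <;>
      exact add_mem (subset_span (by simp)) (subset_span (by simp))
  | zero => simp
  | add a b _ _ ha hb => rw [star_add, add_add_add_comm]; exact add_mem ha hb
  | smul c a _ ha => rw [star_smul, ← smul_add]; exact smul_mem _ c ha

end OrthogonalTriple

end CliffordAlgebra

open CliffordAlgebra

theorem QuadraticForm.exists_isOrtho_triple_span_eq_top {K V : Type*} [Field K]
    [Invertible (2 : K)] [AddCommGroup V] [Module K V] [FiniteDimensional K V]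
    (Q : QuadraticForm K V) (hdim : Module.finrank K V = 3) :
    ∃ u v w : V, Q.IsOrtho u v ∧ Q.IsOrtho u w ∧ Q.IsOrtho v w ∧
      Submodule.span K {u, v, w} = ⊤ := by
  obtain ⟨e, he⟩ :=
    LinearMap.BilinForm.exists_orthogonal_basis (QuadraticForm.associated_isSymm K Q)
  let f := e.reindex (finCongr hdim)
  have hf {i j : Fin 3} (hij : i ≠ j) : Q.IsOrtho (f i) (f j) := by
    simp only [f, Module.Basis.reindex_apply]
    exact QuadraticMap.associated_isOrtho.mp (he ((finCongr hdim).symm.injective.ne hij))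
  refine ⟨f 0, f 1, f 2, hf (by decide), hf (by decide), hf (by decide), ?_⟩
  rw [← f.span_eq]
  congr 1
  ext
  simp [Fin.exists_fin_succ, eq_comm]

/-- In dimension 3 (char K ≠ 2), the four grade-negated products
`A ⟦A⟧₂₃ ⟦A⟧₁₃ ⟦A⟧₁₂`, `A ⟦A⟧₁₃ ⟦A⟧₂₃ ⟦A⟧₁₂`, `A ⟦A⟧₁₂ ⟦A⟧₁₃ ⟦A⟧₂₃`,
`A ⟦A⟧₁₂ ⟦A⟧₂₃ ⟦A⟧₁₃` (with `⟦·⟧₂₃ = reverse`, `⟦·⟧₁₃ = involute`,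
`⟦·⟧₁₂ = conj = reverse ∘ involute`) all equal the same scalar `d`,
the determinant of `x`. -/
theorem det_dim_three_products (K V : Type*) [Field K] [AddCommGroup V] [Module K V]
    [FiniteDimensional K V] (h2 : (2 : K) ≠ 0)
    (hdim : Module.finrank K V = 3)
    (Q : QuadraticForm K V) (x : CliffordAlgebra Q) :
    ∃ d : K,
      x * reverse x * involute x * reverse (involute x) =
        algebraMap K (CliffordAlgebra Q) d ∧
      x * involute x * reverse x * reverse (involute x) =
        algebraMap K (CliffordAlgebra Q) d ∧
      x * reverse (involute x) * involute x * reverse x =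
        algebraMap K (CliffordAlgebra Q) d ∧
      x * reverse (involute x) * reverse x * involute x =
        algebraMap K (CliffordAlgebra Q) d := by
  have : Invertible (2 : K) := invertibleOfNonzero h2
  obtain ⟨u, v, w, huv, huw, hvw, hspan⟩ := Q.exists_isOrtho_triple_span_eq_top hdim
  have hz := add_star_mem_span_one_ι_mul_ι_mul_ι huv huw hvw hspan
  exact exists_mul_reverse_mul_involute_mul_star_eq_algebraMap
    (add_star_mem_center_of_mem_span hz (ι_mul_ι_mul_ι_mem_center huv huw hvw hspan))
    (add_involute_add_reverse_add_star_mem_bot_of_mem_span hz (by simp)) x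
end

section
/- Let K be a field of characteristic not 2, V a K-vector space of dimension 3, Q a quadratic form on V, and x an element of the Clifford algebra of Q. Write conj y := reverse (involute y) and suppose x * conj x * reverse (x * conj x) = algebraMap d for some d : K with d ≠ 0. Then x is invertible with two-sided inverse d⁻¹ • (conj x * reverse (x * conj x)); that is, x * (d⁻¹ • (conj x * reverse (x * conj x))) = 1 and (d⁻¹ • (conj x * reverse (x * conj x))) * x = 1. (This is the paper's three-dimensional inverse formula A⁻¹ = ⟦A⟧₁₂⟦A⟦A⟧₁₂⟧₃₄ / Det(A).) -/
/-!
Since `x * conj x * reverse (x * conj x) = d` with `d ≠ 0`, the element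
`d⁻¹ • (conj x * reverse (x * conj x))` is a right inverse of `x`. It is also a left inverse
because the Clifford algebra of a finite-dimensional space is finite-dimensional, and in a
finite-dimensional (hence Artinian) algebra a right inverse is two-sided. Finite-dimensionality
comes from writing `Q` as the quadratic map of a bilinear form, which makes `CliffordAlgebra Q`
linearly isomorphic to the exterior algebra (Bourbaki's `changeForm`), whose exterior powers
`⋀^k` vanish once `k` exceeds the size of a spanning family.
-/

open CliffordAlgebra

namespace ExteriorAlgebra

variable {R M : Type*} [CommRing R] [AddCommGroup M] [Module R M]

theorem exteriorPower_eq_bot_of_lt {n k : ℕ} {f : Fin n → M}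
    (hf : Submodule.span R (Set.range f) = ⊤) (hk : n < k) : ⋀[R]^k M = ⊥ := by
  rw [← exteriorPower.ιMulti_span_fixedDegree_of_span_eq_top R k M hf, Submodule.span_eq_bot]
  rintro - ⟨a, ha, rfl⟩
  choose g hg using Set.range_subset_iff.mp ha
  refine ιMulti_eq_zero_of_not_inj fun ha_inj => hk.not_ge ?_
  simpa using Fintype.card_le_of_injective g fun i j hij => ha_inj (by simp [← hg, hij])

instance instModuleFinite [Module.Finite R M] : Module.Finite R (ExteriorAlgebra R M) := by
  obtain ⟨n, f, hf⟩ := Module.Finite.exists_fin (R := R) (M := M)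
  have hsup : ⨆ i : Fin (n + 1), ⋀[R]^i M = ⊤ := by
    refine top_le_iff.mp ?_
    rw [← (DirectSum.Decomposition.isInternal (fun i : ℕ => ⋀[R]^i M)).submodule_iSup_eq_top]
    refine iSup_le fun i => ?_
    by_cases hi : i < n + 1
    · exact le_iSup_of_le (⟨i, hi⟩ : Fin (n + 1)) le_rfl
    · simp [exteriorPower_eq_bot_of_lt hf (by omega : n < i)]
  exact ⟨hsup ▸ Submodule.fg_iSup _ fun i => Module.Finite.iff_fg.mp inferInstance⟩

end ExteriorAlgebra

namespace CliffordAlgebra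

instance instModuleFinite {R M : Type*} [CommRing R] [AddCommGroup M] [Module R M]
    [Module.Free R M] [Module.Finite R M] (Q : QuadraticForm R M) :
    Module.Finite R (CliffordAlgebra Q) := by
  obtain ⟨B, hB⟩ := LinearMap.BilinMap.toQuadraticMap_surjective (R := R) (M := M) (N := R) Q
  exact Module.Finite.equiv (changeFormEquiv (Q := 0) (Q' := Q) (by rw [hB, sub_zero]))

end CliffordAlgebra

theorem mul_inv_smul_eq_one_of_mul_eq_algebraMap {K A : Type*} [Field K] [Ring A] [Algebra K A]
    {a b : A} {d : K} (hd : d ≠ 0) (h : a * b = algebraMap K A d) : a * (d⁻¹ • b) = 1 := by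
  rw [mul_smul_comm, h, Algebra.algebraMap_eq_smul_one, smul_smul, inv_mul_cancel₀ hd, one_smul]

theorem inv_dim_three_general (K V : Type*) [Field K] [AddCommGroup V] [Module K V]
    [FiniteDimensional K V]
    (Q : QuadraticForm K V) (x : CliffordAlgebra Q) (d : K) (hd : d ≠ 0)
    (hdet : x * reverse (involute x) * reverse (x * reverse (involute x)) =
      algebraMap K (CliffordAlgebra Q) d) :
    x * (d⁻¹ • (reverse (involute x) * reverse (x * reverse (involute x)))) = 1 ∧
      (d⁻¹ • (reverse (involute x) * reverse (x * reverse (involute x)))) * x = 1 := by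
  have hright := mul_inv_smul_eq_one_of_mul_eq_algebraMap hd ((mul_assoc _ _ _).symm.trans hdet)
  have : IsArtinianRing (CliffordAlgebra Q) := IsArtinianRing.of_finite K _
  exact ⟨hright, mul_eq_one_comm.mp hright⟩

/-- In dimension 3 (char K ≠ 2), if `x * conj x * reverse (x * conj x)` is a
nonzero scalar `d` (with `conj y = reverse (involute y)`), then
`d⁻¹ • (conj x * reverse (x * conj x))` is a two-sided inverse of `x`:
the paper's three-dimensional inverse formula
`A⁻¹ = ⟦A⟧₁₂ ⟦A ⟦A⟧₁₂⟧₃₄ / Det(A)`. -/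
theorem inv_dim_three (K V : Type*) [Field K] [AddCommGroup V] [Module K V]
    [FiniteDimensional K V] (h2 : (2 : K) ≠ 0)
    (hdim : Module.finrank K V = 3)
    (Q : QuadraticForm K V) (x : CliffordAlgebra Q) (d : K) (hd : d ≠ 0)
    (hdet : x * reverse (involute x) * reverse (x * reverse (involute x)) =
      algebraMap K (CliffordAlgebra Q) d) :
    x * (d⁻¹ • (reverse (involute x) * reverse (x * reverse (involute x)))) = 1 ∧
      (d⁻¹ • (reverse (involute x) * reverse (x * reverse (involute x)))) * x = 1 :=
  inv_dim_three_general K V Q x d hd hdet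
end

section
/- Let K be a field of characteristic not 2, V a K-vector space of dimension 3, and Q a quadratic form on V. Then for every element x of the Clifford algebra of Q, the nested product x * conj (x * involute (x * conj x)), where conj y := reverse (involute y), is a scalar, i.e. it lies in the range of algebraMap K (CliffordAlgebra Q). (This is the paper's first nested three-dimensional determinant formula Det(A) = A⟦A⟦A⟦A⟧₁₂⟧₃⟧₁₂.) -/
/-!
Choose an orthogonal basis `e₀, e₁, e₂` of `V`. The pseudoscalar `ω = e₀e₁e₂` commutes with
every `eᵢ`, hence is central, and `ω² = -Q(e₀)Q(e₁)Q(e₂)` is a scalar. On the eight monomials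
in the `eᵢ` the Clifford conjugate fixes `1` and `ω` and negates the others, so `z + conj z` lies
in `span {1, ω}` for every `z`. As `y = x * conj x` is conjugation-invariant, `y = a + cω`, and
`x * conj (x * involute y) = x * reverse y * conj x = (a - cω) * y = a² - c²ω²` is a scalar.
-/

open CliffordAlgebra

namespace CliffordAlgebra

variable {R M : Type*} [CommRing R] [AddCommGroup M] [Module R M] {Q : QuadraticForm R M}

theorem ι_mul_ι_mul_self (m : M) (x : CliffordAlgebra Q) : ι Q m * (ι Q m * x) = Q m • x := by
  rw [← mul_assoc, ι_sq_scalar, Algebra.smul_def]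

section Basis

variable {I : Type*} (b : Module.Basis I R M)

theorem ι_mem_span_range_ι_basis (m : M) : ι Q m ∈ Submodule.span R (Set.range (ι Q ∘ b)) := by
  rw [Set.range_comp, Submodule.span_image, b.span_eq]
  exact Submodule.mem_map_of_mem Submodule.mem_top

theorem span_eq_top_of_one_mem_of_ι_basis_mul_mem {T : Set (CliffordAlgebra Q)} (h1 : 1 ∈ T)
    (hT : ∀ i, ∀ t ∈ T, ι Q (b i) * t ∈ Submodule.span R T) : Submodule.span R T = ⊤ := by
  set S := Submodule.span R T
  have hS : ∀ m, ∀ s ∈ S, ι Q m * s ∈ S := by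
    intro m s hs
    refine (Submodule.span_le (p := S.comap (LinearMap.mulRight R s))).2 ?_
      (ι_mem_span_range_ι_basis b m)
    rintro _ ⟨i, rfl⟩
    exact (Submodule.span_le (p := S.comap (LinearMap.mulLeft R _))).2 (hT i) hs
  refine Submodule.eq_top_iff'.2 fun x ↦ ?_
  induction x using CliffordAlgebra.left_induction with
  | algebraMap r =>
    simpa [Algebra.algebraMap_eq_smul_one] using S.smul_mem r (Submodule.subset_span h1)
  | add _ _ hx hy => exact S.add_mem hx hy
  | ι_mul x m hx => exact hS m x hx

theorem commute_of_forall_commute_ι_basis {a : CliffordAlgebra Q}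
    (ha : ∀ i, Commute a (ι Q (b i))) (x : CliffordAlgebra Q) : Commute a x := by
  have hι : Set.range (ι Q) ⊆ Subalgebra.centralizer R {a} := by
    rintro _ ⟨m, rfl⟩
    refine (Submodule.span_le (p := (Subalgebra.centralizer R {a}).toSubmodule)).2 ?_
      (ι_mem_span_range_ι_basis b m)
    rintro _ ⟨i, rfl⟩
    exact (Subalgebra.mem_centralizer_iff R).2 fun _ h ↦ h ▸ (ha i).eq
  have hx := Algebra.adjoin_le hι (adjoin_range_ι (R := R) (Q := Q) ▸ Algebra.mem_top : x ∈ _)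
  exact (Subalgebra.mem_centralizer_iff R).1 hx a rfl

end Basis

variable (Q) in
def pseudoscalar (b : Fin 3 → M) : CliffordAlgebra Q := ι Q (b 0) * ι Q (b 1) * ι Q (b 2)

variable (Q) in
def monomials (b : Fin 3 → M) : Set (CliffordAlgebra Q) :=
  {1, ι Q (b 0), ι Q (b 1), ι Q (b 2), ι Q (b 0) * ι Q (b 1), ι Q (b 0) * ι Q (b 2),
    ι Q (b 1) * ι Q (b 2), pseudoscalar Q b}

theorem involute_pseudoscalar (b : Fin 3 → M) :
    involute (pseudoscalar Q b) = -pseudoscalar Q b := by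
  simp [pseudoscalar]

section Orthogonal

variable {b : Fin 3 → M} (hb : Pairwise fun i j ↦ Q.IsOrtho (b i) (b j))
include hb

-- stated for `j < i` so that `simp` sorts words in the generators into increasing order
theorem ι_mul_ι_of_lt {i j : Fin 3} (h : j < i) :
    ι Q (b i) * ι Q (b j) = -(ι Q (b j) * ι Q (b i)) :=
  ι_mul_ι_comm_of_isOrtho (hb h.ne')

theorem ι_mul_ι_mul_of_lt {i j : Fin 3} (h : j < i) (x : CliffordAlgebra Q) :
    ι Q (b i) * (ι Q (b j) * x) = -(ι Q (b j) * (ι Q (b i) * x)) :=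
  ι_mul_ι_mul_of_isOrtho x (hb h.ne')

theorem reverse_pseudoscalar : reverse (pseudoscalar Q b) = -pseudoscalar Q b := by
  simp [pseudoscalar, mul_assoc, ι_mul_ι_of_lt hb, ι_mul_ι_mul_of_lt hb]

theorem pseudoscalar_mul_self :
    pseudoscalar Q b * pseudoscalar Q b = algebraMap R _ (-(Q (b 0) * Q (b 1) * Q (b 2))) := by
  simp [pseudoscalar, mul_assoc, ι_mul_ι_mul_of_lt hb, ι_sq_scalar,
    Algebra.algebraMap_eq_smul_one, smul_smul, mul_comm, mul_left_comm]

theorem commute_pseudoscalar_ι (i : Fin 3) : Commute (pseudoscalar Q b) (ι Q (b i)) := by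
  fin_cases i <;>
    simp [Commute, SemiconjBy, pseudoscalar, mul_assoc, ι_mul_ι_of_lt hb, ι_mul_ι_mul_of_lt hb,
      ι_mul_ι_mul_self, ι_sq_scalar]

theorem ι_mul_mem_span_monomials (i : Fin 3) {t : CliffordAlgebra Q} (ht : t ∈ monomials Q b) :
    ι Q (b i) * t ∈ Submodule.span R (monomials Q b) := by
  simp only [monomials, pseudoscalar, mul_assoc, Set.mem_insert_iff,
    Set.mem_singleton_iff] at ht ⊢
  fin_cases i <;> rcases ht with rfl | rfl | rfl | rfl | rfl | rfl | rfl | rfl <;>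
    simp only [mul_one, mul_neg, mul_smul_comm, neg_neg, ι_mul_ι_of_lt hb, ι_mul_ι_mul_of_lt hb,
      ι_mul_ι_mul_self, ι_sq_scalar, Algebra.algebraMap_eq_smul_one, Fin.zero_eta, Fin.mk_one,
      Fin.reduceFinMk, Fin.isValue, Fin.reduceLT]
  all_goals
    repeat first | apply Submodule.neg_mem | apply Submodule.smul_mem
    exact Submodule.subset_span
      (by simp only [Set.mem_insert_iff, Set.mem_singleton_iff, true_or, or_true])

theorem reverse_mem_span_one_pseudoscalar {y : CliffordAlgebra Q}
    (hy : y ∈ Submodule.span R {1, pseudoscalar Q b}) :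
    reverse y ∈ Submodule.span R {1, pseudoscalar Q b} := by
  obtain ⟨a, c, rfl⟩ := Submodule.mem_span_pair.1 hy
  rw [map_add, map_smul, map_smul, reverse.map_one, reverse_pseudoscalar hb, smul_neg, ← neg_smul]
  exact Submodule.mem_span_pair.2 ⟨a, -c, rfl⟩

theorem reverse_mul_self_mem_range_of_mem_span_one_pseudoscalar {y : CliffordAlgebra Q}
    (hy : y ∈ Submodule.span R {1, pseudoscalar Q b}) :
    reverse y * y ∈ Set.range (algebraMap R (CliffordAlgebra Q)) := by
  obtain ⟨a, c, rfl⟩ := Submodule.mem_span_pair.1 hy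
  refine ⟨a * a + c * c * (Q (b 0) * Q (b 1) * Q (b 2)), ?_⟩
  simp only [map_add, map_smul, reverse.map_one, reverse_pseudoscalar hb, add_mul, mul_add,
    smul_mul_assoc, mul_smul_comm, one_mul, mul_one, neg_mul, smul_neg,
    pseudoscalar_mul_self hb, Algebra.algebraMap_eq_smul_one]
  module

end Orthogonal

section OrthogonalBasis

variable (b : Module.Basis (Fin 3) R M) (hb : Pairwise fun i j ↦ Q.IsOrtho (b i) (b j))
include hb

theorem span_monomials_eq_top : Submodule.span R (monomials Q b) = ⊤ :=
  span_eq_top_of_one_mem_of_ι_basis_mul_mem b (by simp [monomials])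
    fun i _ ↦ ι_mul_mem_span_monomials hb i

theorem add_reverse_involute_mem_span_one_pseudoscalar (x : CliffordAlgebra Q) :
    x + reverse (involute x) ∈ Submodule.span R {1, pseudoscalar Q b} := by
  let conjAdd : CliffordAlgebra Q →ₗ[R] CliffordAlgebra Q :=
    LinearMap.id + reverse ∘ₗ involute.toLinearMap
  suffices Submodule.span R (monomials Q b) ≤
      (Submodule.span R {1, pseudoscalar Q b}).comap conjAdd from
    this (span_monomials_eq_top b hb ▸ Submodule.mem_top)
  have h1 : 1 ∈ Submodule.span R {1, pseudoscalar Q b} := Submodule.subset_span (by simp)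
  have hω : pseudoscalar Q b ∈ Submodule.span R {1, pseudoscalar Q b} :=
    Submodule.subset_span (by simp)
  rw [Submodule.span_le]
  intro t ht
  simp only [monomials, Set.mem_insert_iff, Set.mem_singleton_iff] at ht
  rcases ht with rfl | rfl | rfl | rfl | rfl | rfl | rfl | rfl <;>
    simp only [SetLike.mem_coe, Submodule.mem_comap, conjAdd, LinearMap.add_apply,
      LinearMap.id_apply, LinearMap.comp_apply, AlgHom.toLinearMap_apply, map_one,
      reverse.map_one, map_mul, reverse.map_mul, involute_ι, reverse_ι, map_neg, neg_mul, mul_neg,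
      neg_neg, ι_mul_ι_of_lt hb, Fin.isValue, Fin.reduceLT, add_neg_cancel,
      involute_pseudoscalar, reverse_pseudoscalar hb] <;>
    first
    | exact zero_mem _
    | exact add_mem h1 h1
    | exact add_mem hω hω

theorem mem_span_one_pseudoscalar_of_reverse_involute_eq [Invertible (2 : R)]
    {y : CliffordAlgebra Q} (hy : reverse (involute y) = y) :
    y ∈ Submodule.span R {1, pseudoscalar Q b} := by
  have := Submodule.smul_mem _ (⅟2 : R) (add_reverse_involute_mem_span_one_pseudoscalar b hb y)
  rwa [hy, ← two_smul R y, smul_smul, invOf_mul_self, one_smul] at this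

theorem commute_pseudoscalar (x : CliffordAlgebra Q) : Commute (pseudoscalar Q b) x :=
  commute_of_forall_commute_ι_basis b (commute_pseudoscalar_ι hb) x

theorem commute_of_mem_span_one_pseudoscalar {y : CliffordAlgebra Q}
    (hy : y ∈ Submodule.span R {1, pseudoscalar Q b}) (x : CliffordAlgebra Q) : Commute y x := by
  obtain ⟨a, c, rfl⟩ := Submodule.mem_span_pair.1 hy
  exact ((Commute.one_left x).smul_left a).add_left ((commute_pseudoscalar b hb x).smul_left c)

end OrthogonalBasis

end CliffordAlgebra

theorem QuadraticForm.exists_basis_pairwise_isOrtho {K V : Type*} [Field K] [Invertible (2 : K)]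
    [AddCommGroup V] [Module K V] [FiniteDimensional K V] {n : ℕ}
    (hn : Module.finrank K V = n) (Q : QuadraticForm K V) :
    ∃ b : Module.Basis (Fin n) K V, Pairwise fun i j ↦ Q.IsOrtho (b i) (b j) := by
  obtain ⟨v, hv⟩ :=
    LinearMap.BilinForm.exists_orthogonal_basis (QuadraticForm.associated_isSymm K Q)
  refine ⟨v.reindex (finCongr hn), fun i j hij ↦ ?_⟩
  simp only [Module.Basis.reindex_apply]
  exact QuadraticMap.associated_isOrtho.mp (hv fun h ↦ hij ((finCongr hn).symm.injective h))

/-- In dimension 3 (char K ≠ 2), the nested product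
`x * conj (x * involute (x * conj x))` with `conj y = reverse (involute y)`
is a scalar: the paper's first nested three-dimensional determinant formula
`Det(A) = A ⟦A ⟦A ⟦A⟧₁₂⟧₃⟧₁₂`. -/
theorem det_dim_three_nested_first (K V : Type*) [Field K] [AddCommGroup V]
    [Module K V] [FiniteDimensional K V] (h2 : (2 : K) ≠ 0)
    (hdim : Module.finrank K V = 3)
    (Q : QuadraticForm K V) (x : CliffordAlgebra Q) :
    x * reverse (involute (x * involute (x * reverse (involute x)))) ∈
      Set.range (algebraMap K (CliffordAlgebra Q)) := by
  have : Invertible (2 : K) := invertibleOfNonzero h2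
  obtain ⟨b, hb⟩ := QuadraticForm.exists_basis_pairwise_isOrtho hdim Q
  set y := x * reverse (involute x)
  have hy : y ∈ Submodule.span K {1, pseudoscalar Q b} :=
    mem_span_one_pseudoscalar_of_reverse_involute_eq b hb <| by
      simp only [y, map_mul, reverse.map_mul, reverse_involute, reverse_reverse, involute_involute]
  have hry := reverse_mem_span_one_pseudoscalar hb hy
  have hnested : x * reverse (involute (x * involute y)) = reverse y * y := by
    rw [map_mul, involute_involute, reverse.map_mul, ← mul_assoc,
      ← (commute_of_mem_span_one_pseudoscalar b hb hry x).eq, mul_assoc]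
  exact hnested ▸ reverse_mul_self_mem_range_of_mem_span_one_pseudoscalar hb hy
end

section
/- Let K be a field of characteristic not 2, V a K-vector space of dimension 4, and Q a quadratic form on V. Then for every element x of the Clifford algebra of Q there exist s, d : K such that (x * conj x) * (algebraMap s - x * conj x) = algebraMap d, where conj y := reverse (involute y). (This is the paper's four-dimensional determinant formula Det(A) = A⟦A⟧₁₂⟦A⟦A⟧₁₂⟧₃₄: since ξ := A⟦A⟧₁₂ = A·conj(A) has only grades {0,3,4}, the grade-negation ⟦ξ⟧₃₄ equals algebraMap s − ξ with s twice the grade-0 coefficient of ξ, and the theorem asserts the existence of such a scalar s making the product a scalar d.) -/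
/-!
Choose an orthogonal basis `e₀, …, e₃` of `V`. The monomials `e_s`, `s` strictly increasing, span
the Clifford algebra, and `reverse ∘ involute` multiplies `e_s` by `(-1) ^ (|s| + 1).choose 2`.
Since `ξ = x * reverse (involute x)` is fixed by this anti-involution, `ξ` lies in the span of `1`
and the monomials of degree 3 and 4. Two distinct such monomials anticommute and each squares to a
scalar, so writing `ξ = a + z` with `z` in their span, `z * z` is a scalar.
-/

open CliffordAlgebra

theorem QuadraticForm.exists_basis_fin_isOrtho {K V : Type*} [Field K] [AddCommGroup V]
    [Module K V] [FiniteDimensional K V] [Invertible (2 : K)] (Q : QuadraticForm K V) {n : ℕ}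
    (hn : Module.finrank K V = n) :
    ∃ b : Module.Basis (Fin n) K V, Pairwise fun i j => Q.IsOrtho (b i) (b j) := by
  subst hn
  have hsymm : (QuadraticMap.associated (R := K) Q).IsSymm := ⟨QuadraticMap.associated_isSymm K Q⟩
  obtain ⟨b, hb⟩ := LinearMap.BilinForm.exists_orthogonal_basis hsymm
  exact ⟨b, fun i j hij => QuadraticMap.associated_isOrtho.1 (hb hij)⟩

theorem List.mem_sublists_finRange_of_pairwise {n : ℕ} {s : List (Fin n)}
    (hs : s.Pairwise (· < ·)) : s ∈ (List.finRange n).sublists :=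
  List.mem_sublists.2 <| List.sublist_of_subperm_of_pairwise
    (List.subperm_of_subset hs.nodup fun i _ => List.mem_finRange i) hs
    (List.pairwise_lt_finRange n)

section Anticommutator

variable {K A : Type*} [Field K] [Ring A] [Algebra K A] {G : Set A}

theorem mul_add_mul_mem_one_of_mem_span
    (hG : ∀ g ∈ G, ∀ h ∈ G, g * h + h * g ∈ (1 : Submodule K A)) {y z : A}
    (hy : y ∈ Submodule.span K G) (hz : z ∈ Submodule.span K G) :
    y * z + z * y ∈ (1 : Submodule K A) := by
  have h := Submodule.apply_mem_map₂ (LinearMap.mul K A + (LinearMap.mul K A).flip) hy hz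
  rw [Submodule.map₂_span_span] at h
  refine Submodule.span_le.2 ?_ h
  rintro _ ⟨g, hg, h, hh, rfl⟩
  exact hG g hg h hh

theorem exists_mul_algebraMap_sub_eq_algebraMap (h2 : (2 : K) ≠ 0)
    (hG : ∀ g ∈ G, ∀ h ∈ G, g * h + h * g ∈ (1 : Submodule K A)) {ξ : A}
    (hξ : ξ ∈ Submodule.span K (insert 1 G)) :
    ∃ s d : K, ξ * (algebraMap K A s - ξ) = algebraMap K A d := by
  obtain ⟨a, z, hz, rfl⟩ := Submodule.mem_span_insert.1 hξ
  have hzz : (2 : K) • (z * z) ∈ (1 : Submodule K A) := by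
    rw [two_smul]
    exact mul_add_mul_mem_one_of_mem_span hG hz hz
  obtain ⟨d, hd⟩ := Submodule.mem_one.1 ((Submodule.smul_mem_iff _ h2).1 hzz)
  refine ⟨2 * a, a * a - d, ?_⟩
  -- `ξ = a + z` with `z * z = d` scalar, so `ξ * (2a - ξ) = (a + z) * (a - z) = a² - d`.
  rw [map_sub, hd, Algebra.algebraMap_eq_smul_one, Algebra.algebraMap_eq_smul_one]
  simp only [mul_sub, add_mul, mul_add, smul_mul_assoc, mul_smul_comm, one_mul, mul_one]
  module

end Anticommutator

namespace CliffordAlgebra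

variable {K V κ : Type*} [Field K] [AddCommGroup V] [Module K V] (Q : QuadraticForm K V)

def monomial (v : κ → V) (l : List κ) : CliffordAlgebra Q :=
  (l.map fun i => ι Q (v i)).prod

variable {Q} {v : κ → V}

@[simp]
theorem monomial_nil : monomial Q v [] = 1 := rfl

@[simp]
theorem monomial_cons (i : κ) (l : List κ) :
    monomial Q v (i :: l) = ι Q (v i) * monomial Q v l := rfl

theorem monomial_append (l l' : List κ) :
    monomial Q v (l ++ l') = monomial Q v l * monomial Q v l' := by
  simp [monomial]

section Orthogonal

variable (hv : Pairwise fun i j => Q.IsOrtho (v i) (v j))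
include hv

section DecidableEq

variable [DecidableEq κ]

theorem monomial_mul_ι (i : κ) (l : List κ) :
    monomial Q v l * ι Q (v i) = (-1 : K) ^ l.countP (· ≠ i) • (ι Q (v i) * monomial Q v l) := by
  induction l with
  | nil => simp
  | cons j l ih =>
    rw [monomial_cons, mul_assoc, ih, mul_smul_comm]
    by_cases hji : j = i
    · subst hji
      simp
    · rw [ι_mul_ι_mul_of_isOrtho _ (hv hji), List.countP_cons_of_pos (by simpa using hji),
        pow_succ, mul_neg_one, neg_smul, smul_neg]

theorem monomial_mul_monomial (s t : List κ) :
    monomial Q v s * monomial Q v t =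
      (-1 : K) ^ (s.map fun i => t.countP (· ≠ i)).sum • (monomial Q v t * monomial Q v s) := by
  induction s with
  | nil => simp
  | cons i s ih =>
    have hι : ι Q (v i) * monomial Q v t =
        (-1 : K) ^ t.countP (· ≠ i) • (monomial Q v t * ι Q (v i)) := by
      rw [monomial_mul_ι hv, smul_smul, ← pow_add, ← two_mul, pow_mul, neg_one_sq, one_pow,
        one_smul]
    rw [monomial_cons, mul_assoc, ih, mul_smul_comm, ← mul_assoc, hι, smul_mul_assoc, smul_smul,
      List.map_cons, List.sum_cons, pow_add, mul_comm, mul_assoc]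

end DecidableEq

theorem exists_monomial_mul_self (l : List κ) :
    ∃ c : K, monomial Q v l * monomial Q v l = algebraMap K _ c := by
  classical
  induction l with
  | nil => exact ⟨1, by simp⟩
  | cons i l ih =>
    obtain ⟨c, hc⟩ := ih
    refine ⟨(-1) ^ l.countP (· ≠ i) * Q (v i) * c, ?_⟩
    rw [monomial_cons, mul_assoc, ← mul_assoc (monomial Q v l), monomial_mul_ι hv, smul_mul_assoc,
      mul_smul_comm, ← mul_assoc, ← mul_assoc, ι_sq_scalar, mul_assoc, hc, ← map_mul,
      Algebra.smul_def, ← map_mul, mul_assoc]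

theorem reverse_involute_monomial {l : List κ} (hl : l.Nodup) :
    reverse (involute (monomial Q v l)) = (-1 : K) ^ (l.length + 1).choose 2 • monomial Q v l := by
  classical
  induction l with
  | nil => simp
  | cons i l ih =>
    obtain ⟨hi, hl⟩ := List.nodup_cons.1 hl
    have hcount : l.countP (· ≠ i) = l.length :=
      List.countP_eq_length.2 fun j hj => by simpa using (ne_of_mem_of_not_mem hj hi)
    rw [monomial_cons, map_mul, involute_ι, neg_mul, map_neg, reverse.map_mul, reverse_ι, ih hl,
      smul_mul_assoc, monomial_mul_ι hv, hcount, smul_smul, ← neg_smul, List.length_cons]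
    have hC : (l.length + 1 + 1).choose 2 = (l.length + 1).choose 2 + (l.length + 1) := by
      rw [Nat.choose_succ_succ' (l.length + 1) 1, Nat.choose_one_right, add_comm]
    rw [hC, pow_add, pow_succ]
    ring_nf

end Orthogonal

section Sorted

variable [LinearOrder κ] (hv : Pairwise fun i j => Q.IsOrtho (v i) (v j))
include hv

theorem exists_ι_mul_monomial_eq_smul (i : κ) {s : List κ} (hs : s.Pairwise (· < ·)) :
    ∃ (c : K) (s' : List κ), s'.Pairwise (· < ·) ∧ s' ⊆ i :: s ∧
      ι Q (v i) * monomial Q v s = c • monomial Q v s' := by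
  induction s with
  | nil => exact ⟨1, [i], by simp, by simp, by simp⟩
  | cons j t ih =>
    obtain ⟨hjt, ht⟩ := List.pairwise_cons.1 hs
    rcases lt_trichotomy i j with hij | rfl | hji
    · refine ⟨1, i :: j :: t, List.pairwise_cons.2 ⟨?_, hs⟩, List.Subset.refl _, by simp⟩
      rintro a (_ | ⟨_, ha⟩)
      exacts [hij, hij.trans (hjt a ha)]
    · refine ⟨Q (v i), t, ht, by grind, ?_⟩
      rw [monomial_cons, ← mul_assoc, ι_sq_scalar, Algebra.smul_def]
    · obtain ⟨c, s', hs', hsub, heq⟩ := ih ht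
      refine ⟨-c, j :: s', List.pairwise_cons.2 ⟨fun a ha => ?_, hs'⟩, by grind, ?_⟩
      · rcases List.mem_cons.1 (hsub ha) with rfl | ha
        exacts [hji, hjt a ha]
      · rw [monomial_cons, ι_mul_ι_mul_of_isOrtho _ (hv hji.ne'), heq, mul_smul_comm, neg_smul,
          monomial_cons]

theorem exists_monomial_eq_smul_sorted (l : List κ) :
    ∃ (c : K) (s : List κ), s.Pairwise (· < ·) ∧ monomial Q v l = c • monomial Q v s := by
  induction l with
  | nil => exact ⟨1, [], by simp, by simp⟩
  | cons i l ih =>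
    obtain ⟨c, s, hs, heq⟩ := ih
    obtain ⟨c', s', hs', -, heq'⟩ := exists_ι_mul_monomial_eq_smul hv i hs
    exact ⟨c * c', s', hs', by rw [monomial_cons, heq, mul_smul_comm, heq', smul_smul]⟩

end Sorted

def conjFixedIndices (κ : Type*) [LinearOrder κ] : Set (List κ) :=
  {s | s.Pairwise (· < ·) ∧ s ≠ [] ∧ Even ((s.length + 1).choose 2)}

section Basis

variable (b : Module.Basis κ K V)

theorem mem_span_range_monomial (y : CliffordAlgebra Q) :
    y ∈ Submodule.span K (Set.range (monomial Q b)) := by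
  set T := Submodule.span K (Set.range (monomial Q b))
  have hmul : T * T ≤ T := by
    rw [Submodule.span_mul_span]
    refine Submodule.span_mono ?_
    rintro _ ⟨_, ⟨l, rfl⟩, _, ⟨l', rfl⟩, rfl⟩
    exact ⟨l ++ l', monomial_append l l'⟩
  induction y using CliffordAlgebra.induction with
  | algebraMap r =>
    rw [Algebra.algebraMap_eq_smul_one]
    exact T.smul_mem r (Submodule.subset_span ⟨[], monomial_nil⟩)
  | ι w =>
    have hw := Submodule.mem_map_of_mem (f := ι Q) (b.mem_span w)
    rw [Submodule.map_span] at hw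
    refine Submodule.span_le.2 ?_ hw
    rintro _ ⟨_, ⟨i, rfl⟩, rfl⟩
    exact Submodule.subset_span ⟨[i], mul_one _⟩
  | mul y z hy hz => exact hmul (Submodule.mul_mem_mul hy hz)
  | add y z hy hz => exact add_mem hy hz

variable [LinearOrder κ] {b} (hb : Pairwise fun i j => Q.IsOrtho (b i) (b j))
include hb

theorem mem_span_sorted_monomial (y : CliffordAlgebra Q) :
    y ∈ Submodule.span K (monomial Q b '' {s | s.Pairwise (· < ·)}) := by
  refine Submodule.span_le.2 ?_ (mem_span_range_monomial b y)
  rintro _ ⟨l, rfl⟩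
  obtain ⟨c, s, hs, heq⟩ := exists_monomial_eq_smul_sorted hb l
  rw [heq]
  exact Submodule.smul_mem _ c (Submodule.subset_span ⟨s, hs, rfl⟩)

theorem add_reverse_involute_mem_span (y : CliffordAlgebra Q) :
    y + reverse (involute y) ∈
      Submodule.span K (insert 1 (monomial Q b '' conjFixedIndices κ)) := by
  let f : CliffordAlgebra Q →ₗ[K] CliffordAlgebra Q :=
    LinearMap.id + reverse.comp involute.toLinearMap
  refine (Submodule.map_span_le f _ _).2 ?_ (Submodule.mem_map_of_mem
    (mem_span_sorted_monomial hb y))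
  rintro _ ⟨s, hs, rfl⟩
  have hf : f (monomial Q b s) = (1 + (-1) ^ (s.length + 1).choose 2 : K) • monomial Q b s := by
    simp [f, reverse_involute_monomial hb hs.nodup, add_smul]
  rw [hf]
  rcases eq_or_ne s [] with rfl | hne
  · exact Submodule.smul_mem _ _ (Submodule.subset_span (Set.mem_insert _ _))
  rcases Nat.even_or_odd ((s.length + 1).choose 2) with he | ho
  · exact Submodule.smul_mem _ _
      (Submodule.subset_span (Set.mem_insert_of_mem _ ⟨s, ⟨hs, hne, he⟩, rfl⟩))
  · rw [ho.neg_one_pow, add_neg_cancel, zero_smul]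
    exact Submodule.zero_mem _

end Basis

-- The exponent counts the pairs `(i, j) ∈ s × t` with `i ≠ j`, the sign in `monomial_mul_monomial`.
theorem odd_crossings_fin_four :
    ∀ s ∈ (List.finRange 4).sublists, ∀ t ∈ (List.finRange 4).sublists,
      s ≠ [] → t ≠ [] → s ≠ t → Even ((s.length + 1).choose 2) →
        Even ((t.length + 1).choose 2) → Odd (s.map fun i => t.countP (· ≠ i)).sum := by
  decide

theorem monomial_mul_add_mul_mem_one_fin_four {v : Fin 4 → V}
    (hv : Pairwise fun i j => Q.IsOrtho (v i) (v j)) :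
    ∀ g ∈ monomial Q v '' conjFixedIndices (Fin 4),
    ∀ h ∈ monomial Q v '' conjFixedIndices (Fin 4),
      g * h + h * g ∈ (1 : Submodule K (CliffordAlgebra Q)) := by
  rintro _ ⟨s, ⟨hs, hs₀, hse⟩, rfl⟩ _ ⟨t, ⟨ht, ht₀, hte⟩, rfl⟩
  by_cases hst : s = t
  · subst hst
    obtain ⟨c, hc⟩ := exists_monomial_mul_self hv s
    exact Submodule.mem_one.2 ⟨c + c, by rw [hc, map_add]⟩
  · have hodd := odd_crossings_fin_four s (List.mem_sublists_finRange_of_pairwise hs)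
      t (List.mem_sublists_finRange_of_pairwise ht) hs₀ ht₀ hst hse hte
    rw [monomial_mul_monomial hv, hodd.neg_one_pow, neg_one_smul, neg_add_cancel]
    exact Submodule.zero_mem _

end CliffordAlgebra

/-- In dimension 4 (char K ≠ 2), the paper's determinant formula
`Det(A) = A ⟦A⟧₁₂ ⟦A ⟦A⟧₁₂⟧₃₄`: with `ξ = x * conj x` (which has only grades
{0,3,4}), there is `s : K` with `⟦ξ⟧₃₄ = algebraMap s - ξ`, and
`ξ * (algebraMap s - ξ)` is a scalar `d`. -/
theorem det_dim_four_first (K V : Type*) [Field K] [AddCommGroup V] [Module K V]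
    [FiniteDimensional K V] (h2 : (2 : K) ≠ 0)
    (hdim : Module.finrank K V = 4)
    (Q : QuadraticForm K V) (x : CliffordAlgebra Q) :
    ∃ s d : K,
      (x * reverse (involute x)) *
          (algebraMap K (CliffordAlgebra Q) s - x * reverse (involute x)) =
        algebraMap K (CliffordAlgebra Q) d := by
  have : Invertible (2 : K) := invertibleOfNonzero h2
  obtain ⟨b, hb⟩ := Q.exists_basis_fin_isOrtho hdim
  set ξ := x * reverse (involute x)
  have hfix : reverse (involute ξ) = ξ := by
    simp [ξ, reverse_involute]
  have hξ := add_reverse_involute_mem_span hb ξ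
  rw [hfix, ← two_smul K, Submodule.smul_mem_iff _ h2] at hξ
  exact exists_mul_algebraMap_sub_eq_algebraMap h2 (monomial_mul_add_mul_mem_one_fin_four hb) hξ
end

section
/- Let K be a field of characteristic not 2, V a K-vector space of dimension 4, and Q a quadratic form on V. Then for every element x of the Clifford algebra of Q there exist s, d : K such that (x * reverse x) * (algebraMap s - x * reverse x) = algebraMap d. (This is the paper's four-dimensional determinant formula Det(A) = A⟦A⟧₂₃⟦A⟦A⟧₂₃⟧₁₄: since ξ := A⟦A⟧₂₃ = A·rev(A) has only grades {0,1,4}, the grade-negation ⟦ξ⟧₁₄ equals algebraMap s − ξ with s twice the grade-0 coefficient of ξ, and the theorem asserts the existence of such a scalar s making the product a scalar d.) -/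
/-!
Pick a `Q`-orthogonal basis `v₀, …, v₃` and write `eᵢ = ι Q vᵢ`. The ordered monomials
`e_{i₁} ⋯ e_{i_k}` (`i₁ < ⋯ < i_k`) span the Clifford algebra, and reversal multiplies such a
monomial by `(-1) ^ (k choose 2)`, so it fixes exactly the monomials of length `0`, `1` and `4`.
Hence the reversal-fixed element `ξ = x * reverse x` is `a + u` with `a` a scalar and
`u = ι Q m + c • ω`, where `ω = e₀e₁e₂e₃`. In even dimension `ω` anticommutes with vectors and
`ω²` is a scalar, so `u² = r` is a scalar, and `ξ * (2a - ξ) = (a + u) * (a - u) = a² - r`.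
-/

open CliffordAlgebra

section AnticommutingFamily

variable {R A ι : Type*} [CommRing R] [Ring A] [Algebra R A] {e : ι → A}

theorem prod_map_mul_of_notMem (he : Pairwise fun i j => e i * e j = -(e j * e i)) {i : ι}
    {l : List ι} (hi : i ∉ l) :
    (l.map e).prod * e i = (-1 : ℤ) ^ l.length • (e i * (l.map e).prod) := by
  induction l with
  | nil => simp
  | cons j t ih =>
    rw [List.mem_cons, not_or] at hi
    rw [List.map_cons, List.prod_cons, mul_assoc, ih hi.2, mul_smul_comm, ← mul_assoc,
      he (Ne.symm hi.1), List.length_cons, pow_succ, mul_neg_one, neg_smul, neg_mul,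
      ← smul_neg, mul_assoc]

theorem mul_prod_map_of_notMem (he : Pairwise fun i j => e i * e j = -(e j * e i)) {i : ι}
    {l : List ι} (hi : i ∉ l) :
    e i * (l.map e).prod = (-1 : ℤ) ^ l.length • ((l.map e).prod * e i) := by
  rw [prod_map_mul_of_notMem he hi, smul_smul, ← mul_pow, neg_one_mul, neg_neg, one_pow,
    one_smul]

theorem prod_map_reverse_of_nodup (he : Pairwise fun i j => e i * e j = -(e j * e i))
    {l : List ι} (hl : l.Nodup) :
    (l.reverse.map e).prod = (-1 : ℤ) ^ l.length.choose 2 • (l.map e).prod := by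
  induction l with
  | nil => simp
  | cons j t ih =>
    obtain ⟨hj, ht⟩ := List.nodup_cons.1 hl
    rw [List.reverse_cons, List.map_append, List.prod_append, ih ht, List.map_singleton,
      List.prod_singleton, smul_mul_assoc, prod_map_mul_of_notMem he hj, smul_smul, ← pow_add,
      List.length_cons, Nat.choose_succ_succ, Nat.choose_one_right, add_comm, List.map_cons,
      List.prod_cons]

theorem prod_map_mul_prod_map_reverse {q : ι → R} (hq : ∀ i, e i * e i = algebraMap R A (q i))
    (l : List ι) :
    (l.map e).prod * (l.reverse.map e).prod = algebraMap R A (l.map q).prod := by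
  induction l with
  | nil => simp
  | cons j t ih =>
    rw [List.reverse_cons, List.map_append, List.prod_append, List.map_cons, List.prod_cons,
      List.map_singleton, List.prod_singleton]
    calc (e j * (t.map e).prod) * ((t.reverse.map e).prod * e j)
        = e j * ((t.map e).prod * (t.reverse.map e).prod) * e j := by simp only [mul_assoc]
      _ = algebraMap R A (q j * (t.map q).prod) := by
        rw [ih, ← Algebra.commutes, mul_assoc, hq, ← map_mul, mul_comm]

theorem mul_prod_map_of_mem {q : ι → R} (he : Pairwise fun i j => e i * e j = -(e j * e i))
    (hq : ∀ i, e i * e i = algebraMap R A (q i)) {l : List ι} (hl : l.Nodup) {i : ι}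
    (hi : i ∈ l) :
    e i * (l.map e).prod = (-1 : ℤ) ^ (l.length + 1) • ((l.map e).prod * e i) := by
  obtain ⟨l₁, l₂, rfl⟩ := List.append_of_mem hi
  obtain ⟨hi₁, hi₂⟩ : i ∉ l₁ ∧ i ∉ l₂ := by
    simpa [not_or] using (List.nodup_cons.1 (List.nodup_middle.1 hl)).1
  set P₁ := (l₁.map e).prod
  set P₂ := (l₂.map e).prod
  have hleft : e i * (P₁ * (e i * P₂)) =
      (-1 : ℤ) ^ l₁.length • (P₁ * algebraMap R A (q i) * P₂) := by
    rw [← mul_assoc, mul_prod_map_of_notMem he hi₁, smul_mul_assoc, mul_assoc,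
      ← mul_assoc (e i), hq, mul_assoc]
  have hright : P₁ * (e i * P₂) * e i =
      (-1 : ℤ) ^ l₂.length • (P₁ * algebraMap R A (q i) * P₂) := by
    rw [mul_assoc, mul_assoc, prod_map_mul_of_notMem he hi₂, mul_smul_comm, mul_smul_comm,
      ← mul_assoc (e i), hq, mul_assoc]
  have hprod : ((l₁ ++ i :: l₂).map e).prod = P₁ * (e i * P₂) := by simp [P₁, P₂]
  rw [hprod, hleft, hright, smul_smul, ← pow_add, List.length_append, List.length_cons,
    show l₁.length + (l₂.length + 1) + 1 + l₂.length = l₁.length + 2 * (l₂.length + 1) by ring,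
    pow_add, (even_two_mul _).neg_one_pow, mul_one]

theorem exists_mul_prod_map_eq_smul [LinearOrder ι] {q : ι → R}
    (he : Pairwise fun i j => e i * e j = -(e j * e i))
    (hq : ∀ i, e i * e i = algebraMap R A (q i)) (i : ι) {l : List ι}
    (hl : l.Pairwise (· < ·)) :
    ∃ (c : R) (l' : List ι), l'.Pairwise (· < ·) ∧ l' ⊆ i :: l ∧
      e i * (l.map e).prod = c • (l'.map e).prod := by
  induction l with
  | nil => exact ⟨1, [i], List.pairwise_singleton _ i, by simp, by simp⟩
  | cons j t ih =>
    obtain ⟨hjt, ht⟩ := List.pairwise_cons.1 hl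
    rcases lt_trichotomy i j with hij | rfl | hji
    · refine ⟨1, i :: j :: t, List.pairwise_cons.2 ⟨?_, hl⟩, by simp, by simp⟩
      simp only [List.mem_cons, forall_eq_or_imp]
      exact ⟨hij, fun k hk => hij.trans (hjt k hk)⟩
    · refine ⟨q i, t, ht, by simp, ?_⟩
      rw [List.map_cons, List.prod_cons, ← mul_assoc, hq, Algebra.smul_def]
    · obtain ⟨c, l', hl', hsub, heq⟩ := ih ht
      refine ⟨-c, j :: l', List.pairwise_cons.2 ⟨fun k hk => ?_, hl'⟩, ?_, ?_⟩
      · rcases List.mem_cons.1 (hsub hk) with rfl | hk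
        · exact hji
        · exact hjt k hk
      · exact List.cons_subset.2
          ⟨by simp, List.Subset.trans hsub (List.cons_subset_cons i (List.subset_cons_self j t))⟩
      · rw [List.map_cons, List.prod_cons, ← mul_assoc, he hji.ne', neg_mul, mul_assoc, heq,
          List.map_cons, List.prod_cons, mul_smul_comm, neg_smul]

theorem span_prod_map_pairwise_eq_top [LinearOrder ι] {q : ι → R}
    (he : Pairwise fun i j => e i * e j = -(e j * e i))
    (hq : ∀ i, e i * e i = algebraMap R A (q i)) (hgen : Algebra.adjoin R (Set.range e) = ⊤) :
    Submodule.span R {y | ∃ l : List ι, l.Pairwise (· < ·) ∧ (l.map e).prod = y} = ⊤ := by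
  set p := Submodule.span R {y | ∃ l : List ι, l.Pairwise (· < ·) ∧ (l.map e).prod = y}
  have hgen_mul : ∀ i, ∀ z ∈ p, e i * z ∈ p := by
    intro i z hz
    induction hz using Submodule.span_induction with
    | mem y hy =>
      obtain ⟨l, hl, rfl⟩ := hy
      obtain ⟨c, l', hl', -, heq⟩ := exists_mul_prod_map_eq_smul he hq i hl
      exact heq ▸ p.smul_mem c (Submodule.subset_span ⟨l', hl', rfl⟩)
    | zero => simp
    | add y z _ _ hy hz => simpa [mul_add] using p.add_mem hy hz
    | smul c y _ hy => simpa using p.smul_mem c hy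
  have hmul : ∀ a, ∀ z ∈ p, a * z ∈ p := by
    intro a
    induction (hgen ▸ Algebra.mem_top : a ∈ Algebra.adjoin R (Set.range e))
      using Algebra.adjoin_induction with
    | mem x hx => obtain ⟨i, rfl⟩ := hx; exact hgen_mul i
    | algebraMap r => intro z hz; simpa [Algebra.smul_def] using p.smul_mem r hz
    | add x y _ _ hx hy => intro z hz; simpa [add_mul] using p.add_mem (hx z hz) (hy z hz)
    | mul x y _ _ hx hy => intro z hz; simpa [mul_assoc] using hx _ (hy z hz)
  refine eq_top_iff.2 fun a _ => ?_
  simpa using hmul a 1 (Submodule.subset_span ⟨[], List.Pairwise.nil, rfl⟩)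

theorem mul_self_add_smul_of_anticomm {u w : A} (huw : u * w = -(w * u)) {a b : R}
    (hu : u * u = algebraMap R A a) (hw : w * w = algebraMap R A b) (c : R) :
    (u + c • w) * (u + c • w) = algebraMap R A (a + c ^ 2 * b) := by
  simp only [add_mul, mul_add, smul_mul_assoc, mul_smul_comm, hu, hw, huw, map_add,
    map_mul, ← Algebra.smul_def]
  module

theorem algebraMap_add_mul_algebraMap_sub {u : A} {a r : R} (hu : u * u = algebraMap R A r) :
    (algebraMap R A a + u) * (algebraMap R A (2 * a) - (algebraMap R A a + u)) =
      algebraMap R A (a ^ 2 - r) := by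
  calc (algebraMap R A a + u) * (algebraMap R A (2 * a) - (algebraMap R A a + u))
      = (algebraMap R A a + u) * (algebraMap R A a - u) := by
        rw [map_mul, map_ofNat, two_mul]; abel_nf
    _ = algebraMap R A a * algebraMap R A a - u * u :=
        (Algebra.commute_algebraMap_left a u).mul_self_sub_mul_self_eq.symm
    _ = algebraMap R A (a ^ 2 - r) := by rw [hu, ← map_mul, ← map_sub, sq]

end AnticommutingFamily

theorem List.eq_finRange_of_pairwise_lt {n : ℕ} {l : List (Fin n)} (hl : l.Pairwise (· < ·))
    (hlen : l.length = n) : l = List.finRange n := by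
  classical
  refine hl.eq_of_mem_iff (List.pairwise_lt_finRange n) fun a => ?_
  have : l.toFinset = Finset.univ :=
    Finset.eq_univ_of_card _ (by rw [List.toFinset_card_of_nodup hl.nodup, hlen, Fintype.card_fin])
  simp [← List.mem_toFinset, this]

section CliffordAlgebra

variable {K V : Type*} [Field K] [AddCommGroup V] [Module K V] {Q : QuadraticForm K V}

theorem QuadraticForm.exists_basis_isOrtho [Invertible (2 : K)] [FiniteDimensional K V]
    (Q : QuadraticForm K V) {n : ℕ} (hn : Module.finrank K V = n) :
    ∃ v : Module.Basis (Fin n) K V, Pairwise fun i j => Q.IsOrtho (v i) (v j) := by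
  obtain ⟨v, hv⟩ :=
    LinearMap.BilinForm.exists_orthogonal_basis (QuadraticForm.associated_isSymm K Q)
  refine ⟨v.reindex (finCongr hn), fun i j hij => ?_⟩
  simp only [Module.Basis.reindex_apply]
  exact QuadraticMap.associated_isOrtho.1 (hv ((finCongr hn).symm.injective.ne hij))

theorem CliffordAlgebra.pairwise_ι_mul_ι_comm {κ : Type*} {v : κ → V}
    (hv : Pairwise fun i j => Q.IsOrtho (v i) (v j)) :
    Pairwise fun i j => (ι Q ∘ v) i * (ι Q ∘ v) j = -((ι Q ∘ v) j * (ι Q ∘ v) i) :=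
  fun _ _ hij => ι_mul_ι_comm_of_isOrtho (hv hij)

theorem CliffordAlgebra.range_ι_eq_span {κ : Type*} (v : Module.Basis κ K V) :
    LinearMap.range (ι Q) = Submodule.span K (Set.range (ι Q ∘ v)) := by
  rw [Set.range_comp, ← Submodule.map_span, v.span_eq, Submodule.map_top]

theorem CliffordAlgebra.adjoin_range_ι_comp_basis {κ : Type*} (v : Module.Basis κ K V) :
    Algebra.adjoin K (Set.range (ι Q ∘ v)) = ⊤ := by
  rw [eq_top_iff, ← adjoin_range_ι]
  refine Algebra.adjoin_le fun y hy => Algebra.span_le_adjoin K _ ?_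
  rw [← range_ι_eq_span v]
  exact hy

theorem CliffordAlgebra.reverse_prod_map_ι_comp {κ : Type*} (v : κ → V) (l : List κ) :
    reverse (l.map (ι Q ∘ v)).prod = (l.reverse.map (ι Q ∘ v)).prod := by
  rw [← List.map_map, reverse_prod_map_ι, List.map_map, List.map_reverse]

variable (Q) in
def CliffordAlgebra.pseudoscalar_s12 {n : ℕ} (v : Fin n → V) : CliffordAlgebra Q :=
  ((List.finRange n).map (ι Q ∘ v)).prod

theorem CliffordAlgebra.pseudoscalar_mul_self_s12 {n : ℕ} {v : Fin n → V}
    (hv : Pairwise fun i j => Q.IsOrtho (v i) (v j)) :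
    pseudoscalar_s12 Q v * pseudoscalar_s12 Q v =
      (-1 : ℤ) ^ n.choose 2 • algebraMap K _ (∏ i, Q (v i)) := by
  have h := prod_map_mul_prod_map_reverse (e := ι Q ∘ v) (fun i => ι_sq_scalar Q (v i))
    (List.finRange n)
  rw [prod_map_reverse_of_nodup (pairwise_ι_mul_ι_comm hv) (List.nodup_finRange n),
    mul_smul_comm, List.length_finRange] at h
  rw [pseudoscalar_s12, Fin.prod_univ_def, ← h, smul_smul, ← mul_pow, neg_one_mul, neg_neg, one_pow,
    one_smul]

theorem CliffordAlgebra.ι_mul_pseudoscalar {n : ℕ} (hn : Even n) (v : Module.Basis (Fin n) K V)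
    (hv : Pairwise fun i j => Q.IsOrtho (v i) (v j)) (m : V) :
    ι Q m * pseudoscalar_s12 Q v = -(pseudoscalar_s12 Q v * ι Q m) := by
  have hbasis : ∀ i, ι Q (v i) * pseudoscalar_s12 Q v = -(pseudoscalar_s12 Q v * ι Q (v i)) := by
    intro i
    have := mul_prod_map_of_mem (e := ι Q ∘ v) (pairwise_ι_mul_ι_comm hv)
      (fun i => ι_sq_scalar Q (v i)) (List.nodup_finRange n) (List.mem_finRange i)
    rwa [List.length_finRange, hn.add_one.neg_one_pow, neg_one_zsmul] at this
  suffices ∀ y ∈ Submodule.span K (Set.range (ι Q ∘ v)),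
      y * pseudoscalar_s12 Q v = -(pseudoscalar_s12 Q v * y) from
    this _ (range_ι_eq_span v ▸ LinearMap.mem_range_self _ m)
  intro y hy
  induction hy using Submodule.span_induction with
  | mem y hy => obtain ⟨i, rfl⟩ := hy; exact hbasis i
  | zero => simp
  | add y z _ _ hy hz => rw [add_mul, mul_add, hy, hz, neg_add]
  | smul c y _ hy => rw [smul_mul_assoc, mul_smul_comm, hy, smul_neg]

theorem CliffordAlgebra.prod_map_add_reverse_mem {v : Fin 4 → V}
    (hv : Pairwise fun i j => Q.IsOrtho (v i) (v j)) {l : List (Fin 4)}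
    (hl : l.Pairwise (· < ·)) :
    (l.map (ι Q ∘ v)).prod + reverse (l.map (ι Q ∘ v)).prod ∈
      K ∙ 1 ⊔ LinearMap.range (ι Q) ⊔ K ∙ pseudoscalar_s12 Q v := by
  set W := K ∙ 1 ⊔ LinearMap.range (ι Q) ⊔ K ∙ pseudoscalar_s12 Q v
  have h1 : 1 ∈ W :=
    Submodule.mem_sup_left (Submodule.mem_sup_left (Submodule.mem_span_singleton_self 1))
  have hι : ∀ m, ι Q m ∈ W := fun m =>
    Submodule.mem_sup_left (Submodule.mem_sup_right (LinearMap.mem_range_self _ m))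
  have hω : pseudoscalar_s12 Q v ∈ W := Submodule.mem_sup_right (Submodule.mem_span_singleton_self _)
  rw [reverse_prod_map_ι_comp, prod_map_reverse_of_nodup (pairwise_ι_mul_ι_comm hv) hl.nodup]
  have hlen : l.length ≤ 4 := by simpa using hl.nodup.length_le_card
  obtain h | h | h | h | h : l.length = 0 ∨ l.length = 1 ∨ l.length = 2 ∨ l.length = 3 ∨
      l.length = 4 := by omega
  · simpa [List.length_eq_zero_iff.1 h] using add_mem h1 h1
  · obtain ⟨a, rfl⟩ := List.length_eq_one_iff.1 h
    simpa using add_mem (hι (v a)) (hι (v a))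
  · simp [h]
  · simp [h]
  · rw [h, List.eq_finRange_of_pairwise_lt hl h]
    simpa [pseudoscalar_s12, Nat.choose] using add_mem hω hω

theorem CliffordAlgebra.add_reverse_mem (v : Module.Basis (Fin 4) K V)
    (hv : Pairwise fun i j => Q.IsOrtho (v i) (v j)) (y : CliffordAlgebra Q) :
    y + reverse y ∈ K ∙ 1 ⊔ LinearMap.range (ι Q) ⊔ K ∙ pseudoscalar_s12 Q v := by
  have hy : y ∈ Submodule.span K
      {z | ∃ l : List (Fin 4), l.Pairwise (· < ·) ∧ (l.map (ι Q ∘ v)).prod = z} := by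
    rw [span_prod_map_pairwise_eq_top (pairwise_ι_mul_ι_comm hv) (fun i => ι_sq_scalar Q (v i))
      (adjoin_range_ι_comp_basis v)]
    trivial
  induction hy using Submodule.span_induction with
  | mem z hz => obtain ⟨l, hl, rfl⟩ := hz; exact prod_map_add_reverse_mem hv hl
  | zero => simp
  | add z w _ _ hz hw => simpa [add_add_add_comm] using add_mem hz hw
  | smul c z _ hz => simpa [smul_add] using Submodule.smul_mem _ c hz

theorem CliffordAlgebra.exists_eq_of_reverse_eq [Invertible (2 : K)]
    (v : Module.Basis (Fin 4) K V) (hv : Pairwise fun i j => Q.IsOrtho (v i) (v j))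
    {y : CliffordAlgebra Q} (hy : reverse y = y) :
    ∃ (a : K) (m : V) (c : K), y = algebraMap K _ a + (ι Q m + c • pseudoscalar_s12 Q v) := by
  have hyW := Submodule.smul_mem _ (⅟2 : K) (add_reverse_mem v hv y)
  rw [hy, ← two_smul K y, smul_smul, invOf_mul_self, one_smul] at hyW
  obtain ⟨s, hs, p, hp, hsum⟩ := Submodule.mem_sup.1 hyW
  obtain ⟨t, ht, u, ⟨m, hm⟩, htu⟩ := Submodule.mem_sup.1 hs
  obtain ⟨a, ha⟩ := Submodule.mem_span_singleton.1 ht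
  obtain ⟨c, hc⟩ := Submodule.mem_span_singleton.1 hp
  refine ⟨a, m, c, ?_⟩
  rw [← hsum, ← htu, ← ha, ← hm, ← hc, Algebra.algebraMap_eq_smul_one, add_assoc]

end CliffordAlgebra

/-- In dimension 4 (char K ≠ 2), the paper's determinant formula
`Det(A) = A ⟦A⟧₂₃ ⟦A ⟦A⟧₂₃⟧₁₄`: with `ξ = x * reverse x` (which has only
grades {0,1,4}), there is `s : K` with `⟦ξ⟧₁₄ = algebraMap s - ξ`, and
`ξ * (algebraMap s - ξ)` is a scalar `d`. -/
theorem det_dim_four_second (K V : Type*) [Field K] [AddCommGroup V] [Module K V]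
    [FiniteDimensional K V] (h2 : (2 : K) ≠ 0)
    (hdim : Module.finrank K V = 4)
    (Q : QuadraticForm K V) (x : CliffordAlgebra Q) :
    ∃ s d : K,
      (x * reverse x) * (algebraMap K (CliffordAlgebra Q) s - x * reverse x) =
        algebraMap K (CliffordAlgebra Q) d := by
  have : Invertible (2 : K) := invertibleOfNonzero h2
  obtain ⟨v, hv⟩ := Q.exists_basis_isOrtho hdim
  obtain ⟨a, m, c, hξ⟩ :=
    exists_eq_of_reverse_eq v hv (y := x * reverse x) (by rw [reverse.map_mul, reverse_reverse])
  have hω : pseudoscalar_s12 Q v * pseudoscalar_s12 Q v = algebraMap K _ (∏ i, Q (v i)) := by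
    rw [pseudoscalar_mul_self_s12 hv, show Nat.choose 4 2 = 6 from rfl]
    simp
  have hu := mul_self_add_smul_of_anticomm (ι_mul_pseudoscalar (by decide : Even 4) v hv m)
    (ι_sq_scalar Q m) hω c
  exact ⟨2 * a, _, hξ ▸ algebraMap_add_mul_algebraMap_sub hu⟩
end

section
/- Let K be a field of characteristic not 2, V a K-vector space of dimension 4, and Q a quadratic form on V. Then for every element x of the Clifford algebra of Q there exist s, d : K such that, setting adj := reverse x * (algebraMap s - x * reverse x), one has x * adj = algebraMap d and adj * x = algebraMap d. (This is the paper's four-dimensional adjugate Adj(A) = ⟦A⟧₂₃⟦A⟦A⟧₂₃⟧₁₄, which multiplies A on either side to the determinant d; in particular if d ≠ 0 then A is invertible with inverse Adj(A)/d.) -/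
/-!
Fix an orthogonal basis `e₁, …, e₄`. The blades `e_S` (products of the `eᵢ`, `i ∈ S`) span the
Clifford algebra, and `reverse e_S = (-1) ^ (|S| choose 2) • e_S`, which is `+e_S` exactly when
`|S| ∈ {0, 1, 4}`. Hence a reverse-fixed element is `a + g` with `g` in the span `W` of the vectors
and the pseudoscalar `e₁e₂e₃e₄`; as the pseudoscalar anticommutes with vectors, every `g ∈ W`
squares to a scalar `γ`.

Apply this to `x * reverse x = a + g`: with `s = 2a`, `x * Adj = (a + g)(a - g) = a² - γ`.
On the other side `Adj * x = η (2a - η)` with `η = reverse x * x`, and `η = a + g'` with `g' ∈ W`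
because the commutator `x * reverse x - η` is reverse-fixed and has no scalar part (the commutator
of two blades `e_S`, `e_T` is a multiple of `e_{S ∆ T}`, `S ∆ T ≠ ∅`). The two scalars agree since
`x * Adj * x` equals both of them times `x`.
-/

section Adjugate

variable {K A : Type*} [Field K] [Ring A] [Algebra K A]

lemma algebraMap_add_mul_algebraMap_two_mul_sub {a γ : K} {g : A}
    (hg : g * g = algebraMap K A γ) :
    (algebraMap K A a + g) * (algebraMap K A (2 * a) - (algebraMap K A a + g)) =
      algebraMap K A (a * a - γ) := by
  have hsub : algebraMap K A (2 * a) - (algebraMap K A a + g) = algebraMap K A a - g := by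
    rw [two_mul, map_add]
    abel
  rw [hsub, map_sub, map_mul, ← hg, add_mul, mul_sub, mul_sub, ← Algebra.commutes a g]
  abel

lemma mul_algebraMap_sub_mul_mul (c : K) (x y : A) :
    y * (algebraMap K A c - x * y) * x = y * x * (algebraMap K A c - y * x) := by
  rw [mul_sub, sub_mul, mul_assoc y, Algebra.commutes c x]
  noncomm_ring

lemma mul_eq_algebraMap_of_mul_eq_algebraMap {x z : A} {d d' : K}
    (hxz : x * z = algebraMap K A d) (hzx : z * x = algebraMap K A d') :
    z * x = algebraMap K A d := by
  rcases eq_or_ne x 0 with rfl | hx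
  · rw [zero_mul] at hxz
    rw [mul_zero, ← hxz]
  · have h : d • x = d' • x := by
      rw [Algebra.smul_def, ← hxz, mul_assoc, hzx, ← Algebra.commutes, ← Algebra.smul_def]
    rw [hzx, smul_left_injective K hx h]

lemma exists_mul_adjugate_eq_algebraMap {x y g g' : A} {a γ γ' : K}
    (hxy : x * y = algebraMap K A a + g) (hyx : y * x = algebraMap K A a + g')
    (hg : g * g = algebraMap K A γ) (hg' : g' * g' = algebraMap K A γ') :
    ∃ s d : K, x * (y * (algebraMap K A s - x * y)) = algebraMap K A d ∧
      y * (algebraMap K A s - x * y) * x = algebraMap K A d := by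
  have hleft : x * (y * (algebraMap K A (2 * a) - x * y)) = algebraMap K A (a * a - γ) := by
    rw [← mul_assoc, hxy]
    exact algebraMap_add_mul_algebraMap_two_mul_sub hg
  have hright : y * (algebraMap K A (2 * a) - x * y) * x = algebraMap K A (a * a - γ') := by
    rw [mul_algebraMap_sub_mul_mul, hyx]
    exact algebraMap_add_mul_algebraMap_two_mul_sub hg'
  exact ⟨2 * a, a * a - γ, hleft, mul_eq_algebraMap_of_mul_eq_algebraMap hleft hright⟩

end Adjugate

namespace CliffordAlgebra

variable {R M σ : Type*} [CommRing R] [AddCommGroup M] [Module R M] {Q : QuadraticForm R M}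

lemma mem_span_of_reverse_eq_self [Invertible (2 : R)] {s t : Set (CliffordAlgebra Q)}
    (ht : ∀ z ∈ t, reverse z = z) (hs : ∀ z ∈ s, z ∈ t ∨ reverse z = -z)
    {y : CliffordAlgebra Q} (hy : y ∈ Submodule.span R s) (hrev : reverse y = y) :
    y ∈ Submodule.span R t := by
  have hsym : ∀ z ∈ Submodule.span R s, z + reverse z ∈ Submodule.span R t := by
    intro z hz
    induction hz using Submodule.span_induction with
    | mem z hz =>
      rcases hs z hz with hzt | hneg
      · rw [ht z hzt]
        exact add_mem (Submodule.subset_span hzt) (Submodule.subset_span hzt)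
      · rw [hneg, add_neg_cancel]
        exact zero_mem _
    | zero => simp
    | add z z' _ _ h h' =>
      rw [map_add, add_add_add_comm]
      exact add_mem h h'
    | smul r z _ h =>
      rw [map_smul, ← smul_add]
      exact Submodule.smul_mem _ _ h
  have hhalf : y = (⅟2 : R) • (y + reverse y) := by
    rw [hrev, ← two_smul R y, smul_smul, invOf_mul_self, one_smul]
  rw [hhalf]
  exact Submodule.smul_mem _ _ (hsym y hy)

section Blades

variable (Q) in
def ιList (b : σ → M) (l : List σ) : CliffordAlgebra Q := (l.map fun i => ι Q (b i)).prod

variable {b : σ → M}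

@[simp] lemma ιList_nil : ιList Q b [] = 1 := rfl

@[simp] lemma ιList_cons (i : σ) (l : List σ) :
    ιList Q b (i :: l) = ι Q (b i) * ιList Q b l := List.prod_cons

@[simp] lemma ιList_singleton (i : σ) : ιList Q b [i] = ι Q (b i) := List.prod_singleton

@[simp] lemma ιList_append (l₁ l₂ : List σ) :
    ιList Q b (l₁ ++ l₂) = ιList Q b l₁ * ιList Q b l₂ := by
  simp [ιList]

lemma reverse_ιList (l : List σ) : reverse (ιList Q b l) = ιList Q b l.reverse := by
  induction l with
  | nil => simp
  | cons i l ih => simp [ih]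

-- `Finset.toList` fixes an arbitrary order, so a blade is only determined up to sign; all
-- statements about blades are therefore up to scalars.
variable (Q b) in
noncomputable def blade (S : Finset σ) : CliffordAlgebra Q := ιList Q b S.toList

@[simp] lemma blade_empty : blade Q b ∅ = 1 := by simp [blade]

@[simp] lemma blade_singleton (i : σ) : blade Q b {i} = ι Q (b i) := by simp [blade]

variable (hb : Pairwise fun i j => Q.IsOrtho (b i) (b j))
include hb

lemma exists_ιList_eq_smul_of_perm {l l' : List σ} (h : l.Perm l') :
    ∃ c : R, ιList Q b l' = c • ιList Q b l := by
  induction h with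
  | nil => exact ⟨1, (one_smul R _).symm⟩
  | cons i _ ih =>
    obtain ⟨c, hc⟩ := ih
    exact ⟨c, by rw [ιList_cons, ιList_cons, hc, mul_smul_comm]⟩
  | swap i j l =>
    rcases eq_or_ne i j with rfl | hij
    · exact ⟨1, (one_smul R _).symm⟩
    · refine ⟨-1, ?_⟩
      simp only [ιList_cons, ← mul_assoc, ι_mul_ι_comm_of_isOrtho (hb hij), neg_mul,
        neg_smul, one_smul]
  | trans _ _ ih₁ ih₂ =>
    obtain ⟨c₁, hc₁⟩ := ih₁
    obtain ⟨c₂, hc₂⟩ := ih₂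
    exact ⟨c₂ * c₁, by rw [hc₂, hc₁, smul_smul]⟩

lemma ι_mul_ιList_of_notMem {i : σ} {l : List σ} (hi : i ∉ l) :
    ι Q (b i) * ιList Q b l = (-1 : R) ^ l.length • (ιList Q b l * ι Q (b i)) := by
  induction l with
  | nil => simp
  | cons j l ih =>
    obtain ⟨hij, hil⟩ := not_or.mp (List.mem_cons.not.mp hi)
    rw [ιList_cons, ← mul_assoc, ι_mul_ι_comm_of_isOrtho (hb hij), neg_mul, mul_assoc, ih hil,
      mul_smul_comm, ← neg_smul, List.length_cons, pow_succ, mul_neg_one, mul_assoc]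

lemma ιList_reverse_of_nodup {l : List σ} (hl : l.Nodup) :
    ιList Q b l.reverse = (-1 : R) ^ l.length.choose 2 • ιList Q b l := by
  induction l with
  | nil => simp
  | cons i l ih =>
    obtain ⟨hi, hl⟩ := List.nodup_cons.mp hl
    have hcomm :
        ιList Q b l * ι Q (b i) = (-1 : R) ^ l.length • (ι Q (b i) * ιList Q b l) := by
      rw [ι_mul_ιList_of_notMem hb hi, smul_smul, ← pow_add, ← two_mul, pow_mul, neg_one_sq,
        one_pow, one_smul]
    rw [List.reverse_cons, ιList_append, ih hl, smul_mul_assoc, ιList_singleton, hcomm, smul_smul,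
      ← pow_add, ιList_cons, List.length_cons, Nat.choose_succ_succ', Nat.choose_one_right,
      add_comm]

lemma reverse_blade (S : Finset σ) :
    reverse (blade Q b S) = (-1 : R) ^ S.card.choose 2 • blade Q b S := by
  rw [blade, reverse_ιList, ιList_reverse_of_nodup hb S.nodup_toList, Finset.length_toList]

lemma ι_mul_blade_of_notMem {i : σ} {S : Finset σ} (hi : i ∉ S) :
    ι Q (b i) * blade Q b S = (-1 : R) ^ S.card • (blade Q b S * ι Q (b i)) := by
  rw [blade, ι_mul_ιList_of_notMem hb (Finset.mem_toList.not.mpr hi), Finset.length_toList]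

variable [DecidableEq σ]

lemma ι_mul_blade_mem_span_blade_insert {i : σ} {S : Finset σ} (hi : i ∉ S) :
    ι Q (b i) * blade Q b S ∈ R ∙ blade Q b (insert i S) := by
  obtain ⟨c, hc⟩ := exists_ιList_eq_smul_of_perm hb (Finset.toList_insert hi)
  exact Submodule.mem_span_singleton.mpr ⟨c, by rw [blade, blade, ← hc, ιList_cons]⟩

lemma blade_insert_mem_span_ι_mul_blade {i : σ} {S : Finset σ} (hi : i ∉ S) :
    blade Q b (insert i S) ∈ R ∙ (ι Q (b i) * blade Q b S) := by
  obtain ⟨c, hc⟩ := exists_ιList_eq_smul_of_perm hb (Finset.toList_insert hi).symm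
  exact Submodule.mem_span_singleton.mpr ⟨c, by rw [blade, blade, hc, ιList_cons]⟩

lemma ι_mul_blade_mem_span_blade_symmDiff (i : σ) (S : Finset σ) :
    ι Q (b i) * blade Q b S ∈ R ∙ blade Q b (symmDiff {i} S) := by
  by_cases hi : i ∈ S
  · have hS : insert i (S.erase i) = S := Finset.insert_erase hi
    obtain ⟨c, hc⟩ := Submodule.mem_span_singleton.mp
      (blade_insert_mem_span_ι_mul_blade hb (Finset.notMem_erase i S))
    rw [hS] at hc
    have hdiff : symmDiff {i} S = S.erase i := by
      ext j; by_cases j = i <;> simp_all [Finset.mem_symmDiff]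
    refine Submodule.mem_span_singleton.mpr ⟨c * Q (b i), ?_⟩
    rw [hdiff, ← hc, mul_smul_comm, ← mul_assoc, ι_sq_scalar, ← Algebra.smul_def, smul_smul]
  · have hdiff : symmDiff {i} S = insert i S := by
      ext j; by_cases j = i <;> simp_all [Finset.mem_symmDiff]
    rw [hdiff]
    exact ι_mul_blade_mem_span_blade_insert hb hi

lemma blade_mul_blade_mem_span_blade_symmDiff (S T : Finset σ) :
    blade Q b S * blade Q b T ∈ R ∙ blade Q b (symmDiff S T) := by
  induction S using Finset.induction_on with
  | empty =>
    rw [blade_empty, one_mul, ← Finset.bot_eq_empty, bot_symmDiff]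
    exact Submodule.mem_span_singleton_self _
  | insert i S hi ih =>
    obtain ⟨c, hc⟩ := Submodule.mem_span_singleton.mp (blade_insert_mem_span_ι_mul_blade hb hi)
    obtain ⟨μ, hμ⟩ := Submodule.mem_span_singleton.mp ih
    have hdiff : symmDiff (insert i S) T = symmDiff {i} (symmDiff S T) := by
      rw [← symmDiff_assoc, Finset.insert_eq,
        (Finset.disjoint_singleton_left.mpr hi).symmDiff_eq_sup]
      rfl
    rw [← hc, smul_mul_assoc, mul_assoc, ← hμ, mul_smul_comm, hdiff]
    exact Submodule.smul_mem _ _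
      (Submodule.smul_mem _ _ (ι_mul_blade_mem_span_blade_symmDiff hb i _))

lemma mem_span_range_blade (hspan : Submodule.span R (Set.range b) = ⊤)
    (x : CliffordAlgebra Q) : x ∈ Submodule.span R (Set.range (blade Q b)) := by
  set B := Submodule.span R (Set.range (blade Q b))
  have hmul : ∀ y z, y ∈ B → z ∈ B → y * z ∈ B := by
    have hBB : B * B ≤ B := by
      rw [Submodule.span_mul_span, Submodule.span_le]
      rintro _ ⟨_, ⟨S, rfl⟩, _, ⟨T, rfl⟩, rfl⟩
      exact (Submodule.span_singleton_le_iff_mem _ B).mpr (Submodule.subset_span ⟨_, rfl⟩)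
        (blade_mul_blade_mem_span_blade_symmDiff hb S T)
    exact fun y z hy hz => hBB (Submodule.mul_mem_mul hy hz)
  have hone : (1 : CliffordAlgebra Q) ∈ B := Submodule.subset_span ⟨∅, blade_empty⟩
  have hι : Set.range (ι Q) ⊆ B.toSubalgebra hone hmul := by
    rintro _ ⟨m, rfl⟩
    have hm : ι Q m ∈ (Submodule.span R (Set.range b)).map (ι Q) :=
      Submodule.mem_map_of_mem (hspan ▸ Submodule.mem_top)
    rw [Submodule.map_span, ← Set.range_comp] at hm
    refine Submodule.span_le.mpr ?_ hm
    rintro _ ⟨i, rfl⟩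
    exact Submodule.subset_span ⟨{i}, blade_singleton i⟩
  have hle := Algebra.adjoin_le hι
  rw [adjoin_range_ι] at hle
  exact hle Algebra.mem_top

lemma commutator_mem_span_blade (hspan : Submodule.span R (Set.range b) = ⊤)
    (x y : CliffordAlgebra Q) :
    x * y - y * x ∈ Submodule.span R (blade Q b '' {S | S ≠ ∅}) := by
  let f := LinearMap.mul R (CliffordAlgebra Q) - (LinearMap.mul R (CliffordAlgebra Q)).flip
  have hxy : f x y ∈ Submodule.map₂ f (Submodule.span R (Set.range (blade Q b)))
      (Submodule.span R (Set.range (blade Q b))) :=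
    Submodule.apply_mem_map₂ f (mem_span_range_blade hb hspan x) (mem_span_range_blade hb hspan y)
  rw [Submodule.map₂_span_span] at hxy
  refine Submodule.span_le.mpr ?_ hxy
  rintro _ ⟨_, ⟨S, rfl⟩, _, ⟨T, rfl⟩, rfl⟩
  rcases eq_or_ne S T with rfl | hST
  · simp [f]
  obtain ⟨μ, hμ⟩ :=
    Submodule.mem_span_singleton.mp (blade_mul_blade_mem_span_blade_symmDiff hb S T)
  obtain ⟨μ', hμ'⟩ :=
    Submodule.mem_span_singleton.mp (blade_mul_blade_mem_span_blade_symmDiff hb T S)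
  have hne : symmDiff S T ≠ ∅ := by
    rwa [ne_eq, ← Finset.bot_eq_empty, symmDiff_eq_bot]
  simp only [f, LinearMap.sub_apply, LinearMap.mul_apply', LinearMap.flip_apply, ← hμ, ← hμ',
    symmDiff_comm T S, ← sub_smul]
  exact Submodule.smul_mem _ _ (Submodule.subset_span ⟨_, hne, rfl⟩)

end Blades

section Pseudoscalar

variable [Fintype σ] {b : σ → M}

-- In dimension four this is the sum of the grade-one and grade-four parts.
variable (Q b) in
noncomputable def vectorPseudoscalarSpan : Submodule R (CliffordAlgebra Q) :=
  Submodule.span R (insert (blade Q b Finset.univ) (Set.range (ι Q)))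

variable [DecidableEq σ]

variable (hb : Pairwise fun i j => Q.IsOrtho (b i) (b j))
include hb

lemma exists_blade_univ_mul_self_eq_algebraMap :
    ∃ ε : R, blade Q b Finset.univ * blade Q b Finset.univ = algebraMap R _ ε := by
  obtain ⟨ε, hε⟩ := Submodule.mem_span_singleton.mp
    (blade_mul_blade_mem_span_blade_symmDiff hb (Finset.univ : Finset σ) Finset.univ)
  refine ⟨ε, ?_⟩
  rw [← hε, symmDiff_self, Finset.bot_eq_empty, blade_empty, Algebra.algebraMap_eq_smul_one]

variable (hspan : Submodule.span R (Set.range b) = ⊤)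
include hspan

lemma ι_mul_blade_univ (hcard : Even (Fintype.card σ)) (m : M) :
    ι Q m * blade Q b Finset.univ = -(blade Q b Finset.univ * ι Q m) := by
  suffices h : LinearMap.mulRight R (blade Q b Finset.univ) ∘ₗ ι Q +
      LinearMap.mulLeft R (blade Q b Finset.univ) ∘ₗ ι Q = 0 by
    simpa [eq_neg_iff_add_eq_zero] using LinearMap.congr_fun h m
  refine LinearMap.ext_on_range hspan fun i => ?_
  set S := Finset.univ.erase i
  have hiS : i ∉ S := Finset.notMem_erase i _
  obtain ⟨c, hc⟩ := Submodule.mem_span_singleton.mp (blade_insert_mem_span_ι_mul_blade hb hiS)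
  rw [Finset.insert_erase (Finset.mem_univ i)] at hc
  have hodd : Odd S.card := by
    rw [Finset.card_erase_of_mem (Finset.mem_univ i), Finset.card_univ]
    exact Nat.Even.sub_odd (Fintype.card_pos_iff.mpr ⟨i⟩) hcard odd_one
  have hanti : ι Q (b i) * blade Q b S = -(blade Q b S * ι Q (b i)) := by
    rw [ι_mul_blade_of_notMem hb hiS, hodd.neg_one_pow, neg_one_smul]
  calc ι Q (b i) * blade Q b Finset.univ + blade Q b Finset.univ * ι Q (b i)
      = c • (ι Q (b i) * (ι Q (b i) * blade Q b S + blade Q b S * ι Q (b i))) := by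
        rw [← hc, mul_smul_comm, smul_mul_assoc, ← smul_add, mul_add, mul_assoc]
    _ = 0 := by rw [hanti, neg_add_cancel, mul_zero, smul_zero]

lemma exists_mul_self_eq_algebraMap (hcard : Even (Fintype.card σ)) {w : CliffordAlgebra Q}
    (hw : w ∈ vectorPseudoscalarSpan Q b) : ∃ γ : R, w * w = algebraMap R _ γ := by
  obtain ⟨c, z, hz, rfl⟩ := Submodule.mem_span_insert.mp hw
  rw [← LinearMap.coe_range, Submodule.span_eq] at hz
  obtain ⟨m, rfl⟩ := hz
  obtain ⟨ε, hε⟩ := exists_blade_univ_mul_self_eq_algebraMap hb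
  set E := blade Q b Finset.univ
  have hexpand : (c • E + ι Q m) * (c • E + ι Q m) =
      (c * c) • (E * E) + c • (ι Q m * E + E * ι Q m) + ι Q m * ι Q m := by
    simp only [add_mul, mul_add, smul_mul_assoc, mul_smul_comm, smul_smul, smul_add]
    abel
  refine ⟨c * c * ε + Q m, ?_⟩
  rw [hexpand, ι_mul_blade_univ hb hspan hcard, neg_add_cancel, smul_zero, add_zero, hε,
    ι_sq_scalar, Algebra.smul_def, ← map_mul, ← map_add]

end Pseudoscalar

section DimFour

variable [Fintype σ] {b : σ → M}
  (hb : Pairwise fun i j => Q.IsOrtho (b i) (b j)) (hcard : Fintype.card σ = 4)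
include hb hcard

lemma reverse_eq_self_of_mem_insert_blade_univ {z : CliffordAlgebra Q}
    (hz : z ∈ insert (blade Q b Finset.univ) (Set.range (ι Q))) : reverse z = z := by
  rcases hz with rfl | ⟨m, rfl⟩
  · rw [reverse_blade hb, Finset.card_univ, hcard]
    norm_num [Nat.choose]
  · exact reverse_ι m

lemma blade_mem_or_reverse_eq_neg {S : Finset σ} (hS : S ≠ ∅) :
    blade Q b S ∈ insert (blade Q b Finset.univ) (Set.range (ι Q)) ∨
      reverse (blade Q b S) = -blade Q b S := by
  have hle : S.card ≤ 4 := hcard ▸ Finset.card_le_univ S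
  have hpos : 0 < S.card := Finset.card_pos.mpr (Finset.nonempty_iff_ne_empty.mpr hS)
  rw [reverse_blade hb]
  interval_cases h : S.card
  · obtain ⟨i, rfl⟩ := Finset.card_eq_one.mp h
    exact Or.inl (Or.inr ⟨b i, (blade_singleton i).symm⟩)
  · right; norm_num
  · right; norm_num
  · rw [Finset.eq_univ_of_card S (h.trans hcard.symm)]
    exact Or.inl (Or.inl rfl)

variable [DecidableEq σ] [Invertible (2 : R)] (hspan : Submodule.span R (Set.range b) = ⊤)
include hspan

lemma exists_eq_algebraMap_add_of_reverse_eq_self {y : CliffordAlgebra Q} (hy : reverse y = y) :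
    ∃ a : R, ∃ g ∈ vectorPseudoscalarSpan Q b, y = algebraMap R _ a + g := by
  have hmem : y ∈ Submodule.span R
      (insert 1 (insert (blade Q b Finset.univ) (Set.range (ι Q)))) := by
    refine mem_span_of_reverse_eq_self ?_ ?_ (mem_span_range_blade hb hspan y) hy
    · rintro z (rfl | hz)
      · exact reverse.map_one
      · exact reverse_eq_self_of_mem_insert_blade_univ hb hcard hz
    · rintro _ ⟨S, rfl⟩
      rcases eq_or_ne S ∅ with rfl | hS
      · exact Or.inl (Or.inl blade_empty)
      · exact (blade_mem_or_reverse_eq_neg hb hcard hS).imp_left Or.inr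
  obtain ⟨a, g, hg, rfl⟩ := Submodule.mem_span_insert.mp hmem
  exact ⟨a, g, hg, by rw [Algebra.algebraMap_eq_smul_one]⟩

lemma commutator_mem_of_reverse_eq_self (x y : CliffordAlgebra Q)
    (h : reverse (x * y - y * x) = x * y - y * x) : x * y - y * x ∈ vectorPseudoscalarSpan Q b :=
  mem_span_of_reverse_eq_self (fun _ => reverse_eq_self_of_mem_insert_blade_univ hb hcard)
    (by rintro _ ⟨S, hS, rfl⟩; exact blade_mem_or_reverse_eq_neg hb hcard hS)
    (commutator_mem_span_blade hb hspan x y) h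

end DimFour

end CliffordAlgebra

open CliffordAlgebra

/-- In dimension 4 (char K ≠ 2), the paper's adjugate
`Adj(A) = ⟦A⟧₂₃ ⟦A ⟦A⟧₂₃⟧₁₄ = reverse x * (algebraMap s - x * reverse x)`
multiplies `x` on either side to the scalar determinant `d`. -/
theorem adj_dim_four (K V : Type*) [Field K] [AddCommGroup V] [Module K V]
    [FiniteDimensional K V] (h2 : (2 : K) ≠ 0)
    (hdim : Module.finrank K V = 4)
    (Q : QuadraticForm K V) (x : CliffordAlgebra Q) :
    ∃ s d : K,
      x * (reverse x * (algebraMap K (CliffordAlgebra Q) s - x * reverse x)) =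
          algebraMap K (CliffordAlgebra Q) d ∧
        (reverse x * (algebraMap K (CliffordAlgebra Q) s - x * reverse x)) * x =
          algebraMap K (CliffordAlgebra Q) d := by
  have : Invertible (2 : K) := invertibleOfNonzero h2
  obtain ⟨b, hb⟩ :=
    LinearMap.BilinForm.exists_orthogonal_basis (QuadraticForm.associated_isSymm (S := K) Q)
  have horth : Pairwise fun i j => Q.IsOrtho (b i) (b j) :=
    fun i j hij => QuadraticMap.associated_isOrtho.mp (hb hij)
  have hcard : Fintype.card (Fin (Module.finrank K V)) = 4 := (Fintype.card_fin _).trans hdim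
  have hrev : reverse (x * reverse x) = x * reverse x := by rw [reverse.map_mul, reverse_reverse]
  obtain ⟨a, g, hg, hxx⟩ :=
    exists_eq_algebraMap_add_of_reverse_eq_self horth hcard b.span_eq hrev
  have hcomm := commutator_mem_of_reverse_eq_self horth hcard b.span_eq x (reverse x)
    (by rw [map_sub, hrev, reverse.map_mul, reverse_reverse])
  have hxx' : reverse x * x = algebraMap K _ a + (g - (x * reverse x - reverse x * x)) := by
    rw [hxx]
    abel
  have heven : Even (Fintype.card (Fin (Module.finrank K V))) := ⟨2, hcard⟩
  obtain ⟨γ, hγ⟩ := exists_mul_self_eq_algebraMap horth b.span_eq heven hg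
  obtain ⟨γ', hγ'⟩ := exists_mul_self_eq_algebraMap horth b.span_eq heven (sub_mem hg hcomm)
  exact exists_mul_adjugate_eq_algebraMap hxx hxx' hγ hγ'
end
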